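/- arXiv:1705.00127 — 13 statements merged into one kernel-verified Lean document; each statement's English description precedes it below -/
import Mathlib

section
/- Let (X, I) be a p-extendible independence system (p a positive integer) with nonnegative additive weights w, and suppose the instance is p-stable with unique optimal solution S* = argmax_{S ∈ I} w(S). Then every greedy run outputs S*; that is, if e₁, …, e_k is a sequence with Sᵢ = {e₁,…,eᵢ} ∈ I for all i, each eᵢ maximizes w(e) among elements e ∉ S_{i−1} with S_{i−1} ∪ {e} ∈ I, and S_k is a maximal independent set, then S_k = S*. -/
open Finset

/-- A downward-closed independence system on the finite type `α`. -/
def DownClosed {α : Type*} (I : Finset α → Prop) : Prop :=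
  I ∅ ∧ ∀ A B : Finset α, I A → B ⊆ A → I B
/-- `(X, I)` is `p`-extendible: whenever `A ⊆ B`, `A, B ∈ I` and `A ∪ {e} ∈ I`,
there is `Z ⊆ B \ A` with `|Z| ≤ p` and `(B \ Z) ∪ {e} ∈ I`. -/
def Extendible {α : Type*} [DecidableEq α] (p : ℕ) (I : Finset α → Prop) : Prop :=
  ∀ A B : Finset α, ∀ e : α, A ⊆ B → I A → I B → I (insert e A) →
    ∃ Z ⊆ B \ A, Z.card ≤ p ∧ I (insert e (B \ Z))
/-- The additive instance `(I, w)` is `γ`-stable with (unique) optimal solution `S`: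
for every perturbation `w'` with `w ≤ w' ≤ γ·w`, `S` is the unique maximizer of `w'` over `I`. -/
def AddStable {α : Type*} (I : Finset α → Prop) (w : α → ℝ) (γ : ℝ)
    (S : Finset α) : Prop :=
  I S ∧ ∀ w' : α → ℝ, (∀ e, w e ≤ w' e ∧ w' e ≤ γ * w e) →
    ∀ T : Finset α, I T → T ≠ S → ∑ e ∈ T, w' e < ∑ e ∈ S, w' e
/-- A greedy run for additive weights: `e₁, …, e_k` with every prefix independent,
each `eᵢ` a maximum-weight feasible addition, and the final set maximal independent. -/
def GreedyRun {α : Type*} [DecidableEq α] (I : Finset α → Prop) (w : α → ℝ)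
    (l : List α) : Prop :=
  (∀ i : Fin l.length,
    l.get i ∉ (l.take i.val).toFinset ∧
    I (insert (l.get i) (l.take i.val).toFinset) ∧
    ∀ e : α, e ∉ (l.take i.val).toFinset → I (insert e (l.take i.val).toFinset) →
      w e ≤ w (l.get i)) ∧
  ∀ e : α, e ∉ l.toFinset → ¬ I (insert e l.toFinset)

/-- On a `p`-stable instance of a `p`-extendible independence system with
nonnegative additive weights, every greedy run outputs the optimal solution `S*`. -/
theorem greedy_recovers_pStable_pExtendible
    {α : Type*} [Fintype α] [DecidableEq α] (p : ℕ) (hp : 0 < p)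
    (I : Finset α → Prop) (hdc : DownClosed I) (hext : Extendible p I)
    (w : α → ℝ) (hw : ∀ e : α, 0 ≤ w e)
    (Sstar : Finset α) (hstable : AddStable I w (p : ℝ) Sstar)
    (l : List α) (hl : GreedyRun I w l) :
    l.toFinset = Sstar := by
  have hp1 : (1 : ℝ) ≤ (p : ℝ) := by exact_mod_cast hp
  -- every greedy prefix is inside Sstar
  have key : ∀ i : ℕ, (l.take i).toFinset ⊆ Sstar := by
    intro i
    induction i with
    | zero => simp
    | succ n ih =>
      by_cases hn : n < l.length
      · have hstep := hl.1 ⟨n, hn⟩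
        set e := l.get ⟨n, hn⟩ with he
        set A := (l.take n).toFinset with hA
        obtain ⟨heA, hIeA, hmax⟩ := hstep
        have hIA : I A := hdc.2 (insert e A) A hIeA (Finset.subset_insert _ _)
        have heS : e ∈ Sstar := by
          by_contra heS
          obtain ⟨Z, hZsub, hZcard, hIT⟩ :=
            hext A Sstar e ih hIA hstable.1 hIeA
          have hZS : Z ⊆ Sstar := hZsub.trans (Finset.sdiff_subset)
          -- each z in Z is a feasible addition, so w z ≤ w e
          have hzle : ∀ z ∈ Z, w z ≤ w e := by
            intro z hz
            have hz' := hZsub hz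
            rw [Finset.mem_sdiff] at hz'
            refine hmax z hz'.2 ?_
            exact hdc.2 Sstar _ hstable.1
              (Finset.insert_subset hz'.1 ih)
          have hZw : ∑ z ∈ Z, w z ≤ (p : ℝ) * w e := by
            calc ∑ z ∈ Z, w z ≤ ∑ _z ∈ Z, w e := Finset.sum_le_sum hzle
              _ = (Z.card : ℝ) * w e := by simp [mul_comm]
              _ ≤ (p : ℝ) * w e := by
                  apply mul_le_mul_of_nonneg_right _ (hw e)
                  exact_mod_cast hZcard
          -- perturbed weights
          set w' : α → ℝ := fun x => if x = e then (p : ℝ) * w e else w x with hw'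
          have hbounds : ∀ x, w x ≤ w' x ∧ w' x ≤ (p : ℝ) * w x := by
            intro x
            by_cases hx : x = e <;> simp [hw', hx]
            · exact le_mul_of_one_le_left (hw e) hp1
            · exact le_mul_of_one_le_left (hw x) hp1
          set T := insert e (Sstar \ Z) with hT'
          have hTne : T ≠ Sstar := by
            intro h
            exact heS (h ▸ Finset.mem_insert_self e (Sstar \ Z))
          have hlt := hstable.2 w' hbounds T hIT hTne
          -- compute both sums
          have hSsum : ∑ x ∈ Sstar, w' x = ∑ x ∈ Sstar, w x := by
            apply Finset.sum_congr rfl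
            intro x hx
            have : x ≠ e := fun h => heS (h ▸ hx)
            simp [hw', this]
          have heT : e ∉ Sstar \ Z := fun h => heS (Finset.mem_sdiff.mp h).1
          have hTsum : ∑ x ∈ T, w' x
              = (p : ℝ) * w e + (∑ x ∈ Sstar, w x - ∑ x ∈ Z, w x) := by
            rw [hT', Finset.sum_insert heT]
            congr 1
            · simp [hw']
            · rw [Finset.sum_sdiff_eq_sub hZS, hSsum]
              congr 1
              apply Finset.sum_congr rfl
              intro x hx
              have : x ≠ e := fun h => heS (h ▸ hZS hx)
              simp [hw', this]
          rw [hSsum, hTsum] at hlt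
          linarith
        -- conclude the take (n+1) inclusion
        intro x hx
        rw [List.mem_toFinset, List.take_succ] at hx
        rcases List.mem_append.mp hx with h | h
        · exact ih (List.mem_toFinset.mpr h)
        · have : l[n]? = some e := by
            rw [List.getElem?_eq_getElem hn]
            simp [he, List.get_eq_getElem]
          rw [this] at h
          simp at h
          exact h ▸ heS
      · push_neg at hn
        rw [List.take_succ, List.getElem?_eq_none hn]
        simpa using ih
  have hsub : l.toFinset ⊆ Sstar := by
    have := key l.length
    rwa [List.take_length] at this
  refine Finset.Subset.antisymm hsub ?_
  by_contra hns
  obtain ⟨e, heS, heG⟩ := Finset.not_subset.mp hns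
  exact hl.2 e heG (hdc.2 Sstar _ hstable.1 (Finset.insert_subset heS hsub))
end

section
/- For every integer p ≥ 2 and every ε ∈ (0, p−1), there exists a p-extendible independence system (X, I) with nonnegative additive weights w such that the instance is (p−ε)-stable and yet every greedy run outputs a set different from the optimal solution S* = argmax_{S ∈ I} w(S). -/
open Finset

/-!
Take `p` elements of weight `1` forming one block `B`, and one heavier element `a` of weight
`1 + ε / p` that is independent only on its own. Every independent set has at most `p`
elements, which makes the system `p`-extendible for free. Greedy picks `a` first and is then
stuck, whereas `B` is optimal and stays so under `(p - ε)`-perturbations because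
`(p - ε) (1 + ε / p) = p - ε² / p < p`.
-/

variable {α : Type*}

def twoBlocks (B C S : Finset α) : Prop :=
  S ⊆ B ∨ S ⊆ C

theorem downClosed_twoBlocks (B C : Finset α) : DownClosed (twoBlocks B C) :=
  ⟨Or.inl (empty_subset B), fun _ _ hA hBA => hA.imp hBA.trans hBA.trans⟩

theorem card_le_of_twoBlocks {B C S : Finset α} (h : twoBlocks B C S) :
    #S ≤ max #B #C := by
  rcases h with hB | hC
  · exact (card_le_card hB).trans (le_max_left _ _)
  · exact (card_le_card hC).trans (le_max_right _ _)

theorem extendible_of_card_le [DecidableEq α] {p : ℕ} {I : Finset α → Prop}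
    (h : ∀ S, I S → #S ≤ p) : Extendible p I := by
  intro A B e hAB _ hB hAe
  refine ⟨B \ A, subset_rfl, (card_le_card sdiff_subset).trans (h B hB), ?_⟩
  rwa [Finset.sdiff_sdiff_eq_self hAB]

theorem sum_lt_sum_of_ssubset_of_pos {T S : Finset α} {f : α → ℝ} (hTS : T ⊂ S)
    (hf : ∀ e ∈ S, 0 < f e) : ∑ e ∈ T, f e < ∑ e ∈ S, f e := by
  obtain ⟨x, hxS, hxT⟩ := exists_of_ssubset hTS
  exact sum_lt_sum_of_subset hTS.subset hxS hxT (hf x hxS) fun j hj _ => (hf j hj).le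

theorem addStable_twoBlocks_singleton [DecidableEq α] {B : Finset α} {a : α} {w : α → ℝ}
    {γ : ℝ} (hw : ∀ e ∈ B, 0 < w e) (hγ : γ * w a < ∑ e ∈ B, w e) :
    AddStable (twoBlocks B {a}) w γ B := by
  refine ⟨Or.inl subset_rfl, fun w' hw' T hT hTB => ?_⟩
  have hw'B : ∀ e ∈ B, 0 < w' e := fun e he => (hw e he).trans_le (hw' e).1
  have hsub : T ⊆ B → ∑ e ∈ T, w' e < ∑ e ∈ B, w' e := fun h =>
    sum_lt_sum_of_ssubset_of_pos (h.ssubset_of_ne hTB) hw'B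
  rcases hT with hTB' | hTa
  · exact hsub hTB'
  rcases subset_singleton_iff.1 hTa with rfl | rfl
  · exact hsub (empty_subset B)
  calc ∑ e ∈ {a}, w' e = w' a := sum_singleton w' a
    _ ≤ γ * w a := (hw' a).2
    _ < ∑ e ∈ B, w e := hγ
    _ ≤ ∑ e ∈ B, w' e := sum_le_sum fun e _ => (hw' e).1

theorem GreedyRun.toFinset_ne [DecidableEq α] {I : Finset α → Prop} {w : α → ℝ} {l : List α}
    {S : Finset α} {a : α} (hl : GreedyRun I w l) (ha : I {a}) (hS : ∀ e ∈ S, w e < w a) :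
    l.toFinset ≠ S := by
  rintro rfl
  cases l with
  | nil => exact hl.2 a (by simp) (by simpa using ha)
  | cons x t =>
    have hax : w a ≤ w x := by simpa using (hl.1 ⟨0, by simp⟩).2.2 a (by simp) (by simpa using ha)
    exact (hS x (by simp)).not_ge hax

theorem greedy_fails_below_p_stability_general (p : ℕ) (hp : 2 ≤ p)
    (ε : ℝ) (hε0 : 0 < ε) :
    ∃ (n : ℕ) (I : Finset (Fin n) → Prop) (w : Fin n → ℝ) (Sstar : Finset (Fin n)),
      (∀ e, 0 ≤ w e) ∧ DownClosed I ∧ Extendible p I ∧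
      AddStable I w ((p : ℝ) - ε) Sstar ∧
      ∀ l : List (Fin n), GreedyRun I w l → l.toFinset ≠ Sstar := by
  have hp0 : (0 : ℝ) < p := by exact_mod_cast (by omega : 0 < p)
  let B : Finset (Fin (p + 1)) := {0}ᶜ
  have hBcard : #B = p := by simp [B, card_compl]
  let w : Fin (p + 1) → ℝ := fun e => if e = 0 then 1 + ε / p else 1
  have hwB : ∀ e ∈ B, w e = 1 := fun e he => if_neg (by simpa [B] using he)
  have hw0 : w 0 = 1 + ε / p := if_pos rfl
  have hsumB : ∑ e ∈ B, w e = p := by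
    rw [sum_congr rfl hwB, sum_const, hBcard, nsmul_one]
  refine ⟨p + 1, twoBlocks B {0}, w, B, fun e => ?_, downClosed_twoBlocks B {0},
    extendible_of_card_le fun S hS => ?_,
    addStable_twoBlocks_singleton (fun e he => by simp [hwB e he]) ?_,
    fun l hl => hl.toFinset_ne (Or.inr subset_rfl) fun e he => ?_⟩
  · unfold w; split_ifs <;> positivity
  · refine (card_le_of_twoBlocks hS).trans ?_
    rw [hBcard, card_singleton]
    exact max_le le_rfl (by omega)
  · rw [hw0, hsumB]
    have : ((p : ℝ) - ε) * (1 + ε / p) = p - ε ^ 2 / p := by field_simp; ring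
    rw [this]
    linarith [div_pos (pow_pos hε0 2) hp0]
  · rw [hwB e he, hw0]
    linarith [div_pos hε0 hp0]

/-- For every integer `p ≥ 2` and `ε ∈ (0, p−1)` there is a `p`-extendible
independence system with nonnegative additive weights that is `(p−ε)`-stable, yet every
greedy run outputs a set different from the optimal solution `S*`. -/
theorem greedy_fails_below_p_stability (p : ℕ) (hp : 2 ≤ p)
    (ε : ℝ) (hε0 : 0 < ε) (hε1 : ε < (p : ℝ) - 1) :
    ∃ (n : ℕ) (I : Finset (Fin n) → Prop) (w : Fin n → ℝ) (Sstar : Finset (Fin n)),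
      (∀ e, 0 ≤ w e) ∧ DownClosed I ∧ Extendible p I ∧
      AddStable I w ((p : ℝ) - ε) Sstar ∧
      ∀ l : List (Fin n), GreedyRun I w l → l.toFinset ≠ Sstar :=
  greedy_fails_below_p_stability_general p hp ε hε0
end

section
/- For every M > 1, there exists an independence system (X, I) that is a 2-system, together with nonnegative additive weights w, such that the instance is M-stable and yet every greedy run outputs a set different from the optimal solution S* = argmax_{S ∈ I} w(S). -/
open Finset

/-- `J` is a base of `Y`: a maximal independent subset of `Y`. -/
def IsBaseOf {α : Type*} [DecidableEq α] (I : Finset α → Prop) (Y J : Finset α) : Prop :=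
  J ⊆ Y ∧ I J ∧ ∀ e ∈ Y, e ∉ J → ¬ I (insert e J)

/-- `(X, I)` is a `p`-system: any two bases of any `Y` have cardinalities within a factor `p`. -/
def PSystem {α : Type*} [DecidableEq α] (p : ℕ) (I : Finset α → Prop) : Prop :=
  ∀ Y J J' : Finset α, IsBaseOf I Y J → IsBaseOf I Y J' → J.card ≤ p * J'.card
/- ### Auxiliary construction -/

/-- The special "trap" element. -/
def aElt (m : ℕ) : Fin (2*m+3) := ⟨2*m+2, by omega⟩

/-- Independence: either avoid `aElt m`, or have at most `m+1` elements. -/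
def myI (m : ℕ) (S : Finset (Fin (2*m+3))) : Prop := aElt m ∉ S ∨ S.card ≤ m+1

/-- Weights: the trap element weighs 2, everything else 1. -/
def myW (m : ℕ) (e : Fin (2*m+3)) : ℝ := if e = aElt m then 2 else 1

lemma base_not_mem (m : ℕ) (Y J : Finset (Fin (2*m+3)))
    (hJ : IsBaseOf (myI m) Y J) (ha : aElt m ∉ J) : J = Y.erase (aElt m) := by
  obtain ⟨hsub, hind, hmax⟩ := hJ
  apply Finset.Subset.antisymm
  · exact Finset.subset_erase.2 ⟨hsub, ha⟩
  · intro e he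
    rw [Finset.mem_erase] at he
    by_contra heJ
    refine hmax e he.2 heJ (Or.inl ?_)
    intro hmem
    rcases Finset.mem_insert.1 hmem with h | h
    · exact he.1 h.symm
    · exact ha h

lemma base_mem (m : ℕ) (Y J : Finset (Fin (2*m+3)))
    (hJ : IsBaseOf (myI m) Y J) (ha : aElt m ∈ J) :
    J.card ≤ m+1 ∧ (J = Y ∨ J.card = m+1) := by
  obtain ⟨hsub, hind, hmax⟩ := hJ
  have hcard : J.card ≤ m+1 := hind.resolve_left (not_not.2 ha)
  refine ⟨hcard, ?_⟩
  by_cases hYJ : Y ⊆ J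
  · exact Or.inl (Finset.Subset.antisymm hsub hYJ)
  · right
    obtain ⟨e, heY, heJ⟩ := Finset.not_subset.1 hYJ
    have hni := hmax e heY heJ
    have h2 : ¬ (insert e J).card ≤ m+1 := fun hc => hni (Or.inr hc)
    have h3 : (insert e J).card = J.card + 1 := Finset.card_insert_of_notMem heJ
    omega

lemma myDown (m : ℕ) : DownClosed (myI m) := by
  refine ⟨Or.inr (by simp), ?_⟩
  intro A B hA hBA
  rcases hA with h | h
  · exact Or.inl fun hb => h (hBA hb)
  · exact Or.inr (le_trans (Finset.card_le_card hBA) h)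

lemma erase_univ_card (m : ℕ) :
    (Finset.univ.erase (aElt m)).card = 2*m+2 := by
  rw [Finset.card_erase_of_mem (Finset.mem_univ _)]
  simp

lemma myPSystem (m : ℕ) : PSystem 2 (myI m) := by
  intro Y J J' hJ hJ'
  have hJY := hJ.1
  have hJ'Y := hJ'.1
  by_cases haJ : aElt m ∈ J
  · obtain ⟨hc, _⟩ := base_mem m Y J hJ haJ
    by_cases haJ' : aElt m ∈ J'
    · obtain ⟨hc', hor'⟩ := base_mem m Y J' hJ' haJ'
      rcases hor' with rfl | h'
      · have := Finset.card_le_card hJY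
        omega
      · omega
    · -- a ∈ J, a ∉ J' : then Y is not independent
      have hJ'eq := base_not_mem m Y J' hJ' haJ'
      have haY : aElt m ∈ Y := hJY haJ
      have hnI : ¬ myI m Y := by
        have hm := hJ'.2.2 (aElt m) haY (by rw [hJ'eq]; exact Finset.notMem_erase _ _)
        rwa [hJ'eq, Finset.insert_erase haY] at hm
      have hYc : m+2 ≤ Y.card := by
        rcases not_or.1 hnI with ⟨_, h2⟩
        omega
      have hJ'c : J'.card = Y.card - 1 := by
        rw [hJ'eq, Finset.card_erase_of_mem haY]
      omega
  · have hJeq := base_not_mem m Y J hJ haJ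
    have hJle : J.card ≤ 2*m+2 := by
      have hsub : J ⊆ Finset.univ.erase (aElt m) := by
        rw [hJeq]
        exact Finset.erase_subset_erase _ (Finset.subset_univ Y)
      have := Finset.card_le_card hsub
      rwa [erase_univ_card] at this
    by_cases haJ' : aElt m ∈ J'
    · obtain ⟨hc', hor'⟩ := base_mem m Y J' hJ' haJ'
      rcases hor' with rfl | h'
      · have : J ⊆ J' := by rw [hJeq]; exact Finset.erase_subset _ _
        have := Finset.card_le_card this
        omega
      · omega
    · have hJ'eq := base_not_mem m Y J' hJ' haJ'
      rw [hJeq, hJ'eq]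
      omega

lemma myStable (M : ℝ) (m : ℕ) (hM : 1 < M) (h2 : 2*M ≤ (m:ℝ)) :
    AddStable (myI m) (myW m) M (Finset.univ.erase (aElt m)) := by
  constructor
  · exact Or.inl (Finset.notMem_erase _ _)
  · intro w' hw' T hT hTne
    have hw'ge : ∀ e, e ≠ aElt m → (1:ℝ) ≤ w' e := by
      intro e he
      have h := (hw' e).1
      rwa [myW, if_neg he] at h
    by_cases haT : aElt m ∈ T
    · have hTcard : T.card ≤ m+1 := hT.resolve_left (not_not.2 haT)
      have hsub : T.erase (aElt m) ⊆ Finset.univ.erase (aElt m) :=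
        Finset.erase_subset_erase _ (Finset.subset_univ T)
      have hTsum : ∑ e ∈ T, w' e = w' (aElt m) + ∑ e ∈ T.erase (aElt m), w' e :=
        (Finset.add_sum_erase T w' haT).symm
      have hSsum : ∑ e ∈ Finset.univ.erase (aElt m), w' e
          = ∑ e ∈ Finset.univ.erase (aElt m) \ T.erase (aElt m), w' e
            + ∑ e ∈ T.erase (aElt m), w' e :=
        (Finset.sum_sdiff hsub).symm
      have hdcard : m+2 ≤ (Finset.univ.erase (aElt m) \ T.erase (aElt m)).card := by
        have h1 := Finset.card_sdiff_of_subset hsub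
        have h2' : (T.erase (aElt m)).card = T.card - 1 :=
          Finset.card_erase_of_mem haT
        rw [h1, erase_univ_card, h2']
        omega
      have hdsum : ((m:ℝ)+2) ≤ ∑ e ∈ Finset.univ.erase (aElt m) \ T.erase (aElt m), w' e := by
        calc ((m:ℝ)+2) ≤ ((Finset.univ.erase (aElt m) \ T.erase (aElt m)).card : ℝ) := by
              exact_mod_cast hdcard
          _ ≤ ∑ e ∈ Finset.univ.erase (aElt m) \ T.erase (aElt m), w' e := by
              have := Finset.card_nsmul_le_sum
                (Finset.univ.erase (aElt m) \ T.erase (aElt m)) w' 1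
                (fun e he => hw'ge e (Finset.ne_of_mem_erase (Finset.mem_sdiff.1 he).1))
              simpa using this
      have hwa : w' (aElt m) ≤ 2*M := by
        have h := (hw' (aElt m)).2
        rw [myW, if_pos rfl] at h
        linarith
      rw [hTsum, hSsum]
      have : (m:ℝ) ≥ 0 := Nat.cast_nonneg m
      linarith
    · have hsub : T ⊆ Finset.univ.erase (aElt m) := by
        intro e he
        exact Finset.mem_erase.2 ⟨fun h => haT (h ▸ he), Finset.mem_univ e⟩
      have hss : T ⊂ Finset.univ.erase (aElt m) := lt_of_le_of_ne hsub hTne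
      obtain ⟨i, hiS, hiT⟩ := Finset.exists_of_ssubset hss
      refine Finset.sum_lt_sum_of_subset hsub hiS hiT ?_ ?_
      · have := hw'ge i (Finset.ne_of_mem_erase hiS)
        linarith
      · intro j hj _
        have := hw'ge j (Finset.ne_of_mem_erase hj)
        linarith

lemma greedy_contains (m : ℕ) (l : List (Fin (2*m+3)))
    (hl : GreedyRun (myI m) (myW m) l) : aElt m ∈ l.toFinset := by
  by_contra ha
  cases l with
  | nil =>
      have h := hl.2 (aElt m) (by simp)
      refine h (Or.inr ?_)
      simp
  | cons e rest =>
      have h0 := hl.1 ⟨0, by simp⟩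
      have hle := h0.2.2 (aElt m) (by simp) (Or.inr (by simp))
      have hget : (e :: rest).get ⟨0, by simp⟩ = e := rfl
      have hea : e ≠ aElt m := by
        intro h
        exact ha (by simp [h])
      rw [hget] at hle
      rw [myW, if_pos rfl, myW, if_neg hea] at hle
      norm_num at hle

/-- For every `M > 1` there is a `2`-system with nonnegative additive
weights that is `M`-stable, yet every greedy run outputs a set different from the
optimal solution `S*`. -/
theorem greedy_fails_on_stable_two_systems (M : ℝ) (hM : 1 < M) :
    ∃ (n : ℕ) (I : Finset (Fin n) → Prop) (w : Fin n → ℝ) (Sstar : Finset (Fin n)),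
      (∀ e, 0 ≤ w e) ∧ DownClosed I ∧ PSystem 2 I ∧
      AddStable I w M Sstar ∧
      ∀ l : List (Fin n), GreedyRun I w l → l.toFinset ≠ Sstar := by
  set m : ℕ := ⌈2*M⌉₊ with hm
  have hmM : 2*M ≤ (m:ℝ) := Nat.le_ceil _
  refine ⟨2*m+3, myI m, myW m, Finset.univ.erase (aElt m), ?_, myDown m, myPSystem m,
    myStable M m hM hmM, ?_⟩
  · intro e
    rw [myW]
    split <;> norm_num
  · intro l hl hfalse
    have := greedy_contains m l hl
    rw [hfalse] at this
    exact Finset.notMem_erase _ _ this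
end

section
/- Let f : 2^X → ℝ≥0 be monotone and submodular, let γ ≥ 1, fix an ordered sequence of elements e₁, e₂, …, e_k of X, and let δᵢ = f({e₁,…,eᵢ}) − f({e₁,…,e_{i−1}}). Define f̃(S) := f(S) + (γ−1)·Σ_{i : eᵢ ∈ S} δᵢ. Then f̃ is a valid γ-perturbation of f; that is: (1) f̃ is monotone and submodular; (2) f(S) ≤ f̃(S) ≤ γ·f(S) for all S ⊆ X; and (3) 0 ≤ f̃_S(j) − f_S(j) ≤ (γ−1)·f({j}) for all S ⊆ X and j ∈ X \ S. -/
open Finset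

/-- Monotonicity of a set function. -/
def MonotoneFn {α : Type*} (f : Finset α → ℝ) : Prop :=
  ∀ A B : Finset α, A ⊆ B → f A ≤ f B

/-- Submodularity of a set function. -/
def SubmodularFn {α : Type*} [DecidableEq α] (f : Finset α → ℝ) : Prop :=
  ∀ A B : Finset α, f (A ∪ B) + f (A ∩ B) ≤ f A + f B

/-- `f'` is a `γ`-perturbation of the monotone submodular function `f`. -/
def IsPerturbation {α : Type*} [DecidableEq α] (γ : ℝ) (f f' : Finset α → ℝ) : Prop :=
  (∀ S : Finset α, 0 ≤ f' S) ∧ MonotoneFn f' ∧ SubmodularFn f' ∧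
  (∀ S : Finset α, f S ≤ f' S ∧ f' S ≤ γ * f S) ∧
  ∀ S : Finset α, ∀ j ∉ S,
    f (insert j S) - f S ≤ f' (insert j S) - f' S ∧
    (f' (insert j S) - f' S) - (f (insert j S) - f S) ≤ (γ - 1) * f {j}

/-!
The boost `S ↦ ∑_{eᵢ ∈ S} δᵢ` is a modular function with nonnegative weights, so adding a
nonnegative multiple of it to `f` preserves monotonicity and submodularity and shifts every
marginal gain `f_S(j)` by exactly `(γ - 1)` times its value on `{j}`. Everything then reduces to
the boost being dominated by `f`: by diminishing returns each gain `δᵢ` with `eᵢ ∈ S` is at most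
the gain of adding `eᵢ` to `S ∩ {e₁, …, eᵢ₋₁}`, and these gains telescope to at most `f S`.
-/

section SetFunction

variable {α : Type*} [DecidableEq α] {f : Finset α → ℝ}

theorem SubmodularFn.insert_sub_le_insert_sub (hsub : SubmodularFn f) {T P : Finset α}
    (hTP : T ⊆ P) {e : α} (he : e ∉ P) :
    f (insert e P) - f P ≤ f (insert e T) - f T := by
  have h := hsub (insert e T) P
  rw [insert_union, union_eq_right.mpr hTP, insert_inter_of_notMem he,
    inter_eq_left.mpr hTP] at h
  linarith

theorem SubmodularFn.sum_ite_chain_gain_le (hsub : SubmodularFn f) (S : Finset α) :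
    ∀ {n : ℕ} (e : Fin n → α) (P : ℕ → Finset α),
      (∀ i : Fin n, P (i + 1) = insert (e i) (P i)) →
      ∑ i, (if e i ∈ S then f (P (i + 1)) - f (P i) else 0) ≤ f (S ∩ P n) - f (S ∩ P 0)
  | 0, _, _, _ => by simp
  | n + 1, e, P, hP => by
    have ih := hsub.sum_ite_chain_gain_le S (e ∘ Fin.castSucc) P fun i => hP i.castSucc
    have hstep : (if e (Fin.last n) ∈ S then f (P (n + 1)) - f (P n) else 0) ≤
        f (S ∩ P (n + 1)) - f (S ∩ P n) := by
      have hlast : P (n + 1) = insert (e (Fin.last n)) (P n) := hP (Fin.last n)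
      by_cases hold : e (Fin.last n) ∈ P n
      · rw [hlast, insert_eq_of_mem hold]
        split_ifs <;> simp
      split_ifs with hS
      · rw [hlast, inter_insert_of_mem hS]
        exact hsub.insert_sub_le_insert_sub inter_subset_right hold
      · rw [hlast, inter_insert_of_notMem hS, sub_self]
    rw [Fin.sum_univ_castSucc]
    simp only [Function.comp_apply, Fin.val_castSucc, Fin.val_last] at ih ⊢
    linarith

def weightedCount {ι : Type*} [Fintype ι] (e : ι → α) (w : ι → ℝ) (S : Finset α) : ℝ :=
  ∑ i, if e i ∈ S then w i else 0

section weightedCount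

variable {ι : Type*} [Fintype ι] (e : ι → α) (w : ι → ℝ)

@[simp]
theorem weightedCount_empty : weightedCount e w ∅ = 0 := by
  simp [weightedCount]

theorem weightedCount_monotoneFn (hw : ∀ i, 0 ≤ w i) : MonotoneFn (weightedCount e w) :=
  fun _ _ hAB => sum_le_sum fun i _ => by
    split_ifs with hA hB hB
    exacts [le_rfl, absurd (hAB hA) hB, hw i, le_rfl]

theorem weightedCount_union_add_inter (A B : Finset α) :
    weightedCount e w (A ∪ B) + weightedCount e w (A ∩ B) =
      weightedCount e w A + weightedCount e w B := by
  simp only [weightedCount, ← sum_add_distrib]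
  refine sum_congr rfl fun i _ => ?_
  by_cases hA : e i ∈ A <;> by_cases hB : e i ∈ B <;> simp [hA, hB]

end weightedCount

theorem List.toFinset_take_add_one (l : List α) (i : Fin l.length) :
    (l.take (i + 1)).toFinset = insert (l.get i) (l.take i).toFinset := by
  rw [← List.take_concat_get i.isLt, List.concat_eq_append, List.toFinset_append]
  ext x
  simp [or_comm]

/-- The paper's `δᵢ₊₁`: positions in `l` are counted from `0`. -/
def prefixGain (f : Finset α → ℝ) (l : List α) (i : Fin l.length) : ℝ :=
  f (l.take (i + 1)).toFinset - f (l.take i).toFinset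

theorem prefixGain_nonneg (hmono : MonotoneFn f) (l : List α) (i : Fin l.length) :
    0 ≤ prefixGain f l i := by
  rw [prefixGain, sub_nonneg, l.toFinset_take_add_one]
  exact hmono _ _ (subset_insert _ _)

theorem weightedCount_prefixGain_le (hf0 : ∀ S, 0 ≤ f S) (hmono : MonotoneFn f)
    (hsub : SubmodularFn f) (l : List α) (S : Finset α) :
    weightedCount l.get (prefixGain f l) S ≤ f S := by
  have hchain := hsub.sum_ite_chain_gain_le S l.get (fun k => (l.take k).toFinset)
    (l.toFinset_take_add_one)
  have hS : f (S ∩ (l.take l.length).toFinset) ≤ f S :=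
    hmono _ _ inter_subset_left
  simp only [List.take_zero, List.toFinset_nil, inter_empty] at hchain
  linarith [hf0 ∅, show weightedCount l.get (prefixGain f l) S ≤ _ from hchain]

theorem isPerturbation_add_mul (hf0 : ∀ S, 0 ≤ f S) (hmono : MonotoneFn f)
    (hsub : SubmodularFn f) {γ : ℝ} (hγ : 1 ≤ γ) {g : Finset α → ℝ} (hg : MonotoneFn g)
    (hg_modular : ∀ A B, g (A ∪ B) + g (A ∩ B) = g A + g B) (hg_empty : g ∅ = 0)
    (hgf : ∀ S, g S ≤ f S) :
    IsPerturbation γ f (fun S => f S + (γ - 1) * g S) := by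
  have hγ' : 0 ≤ γ - 1 := sub_nonneg.mpr hγ
  have hg0 (S : Finset α) : 0 ≤ g S := hg_empty ▸ hg ∅ S (empty_subset S)
  have hg_insert {S : Finset α} {j : α} (hj : j ∉ S) : g (insert j S) = g {j} + g S := by
    have := hg_modular {j} S
    rwa [singleton_union, singleton_inter_of_notMem hj, hg_empty, add_zero] at this
  refine ⟨fun S => ?_, fun A B hAB => ?_, fun A B => ?_, fun S => ⟨?_, ?_⟩, fun S j hj => ⟨?_, ?_⟩⟩
  · nlinarith [hf0 S, hg0 S]
  · nlinarith [hmono A B hAB, hg A B hAB]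
  · nlinarith [hsub A B, hg_modular A B]
  · nlinarith [hg0 S]
  · nlinarith [hgf S]
  · nlinarith [hg_insert hj, hg0 {j}]
  · nlinarith [hg_insert hj, hgf {j}]

end SetFunction

theorem marginal_boost_isPerturbation_general
    {α : Type*} [DecidableEq α]
    (f : Finset α → ℝ) (hf0 : ∀ S : Finset α, 0 ≤ f S)
    (hmono : MonotoneFn f) (hsub : SubmodularFn f)
    (γ : ℝ) (hγ : 1 ≤ γ) (l : List α) :
    IsPerturbation γ f (fun S =>
      f S + (γ - 1) * ∑ i : Fin l.length,
        if l.get i ∈ S then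
          f (l.take (i.val + 1)).toFinset - f (l.take i.val).toFinset
        else 0) :=
  isPerturbation_add_mul hf0 hmono hsub hγ
    (weightedCount_monotoneFn l.get _ (prefixGain_nonneg hmono l))
    (weightedCount_union_add_inter l.get (prefixGain f l)) (weightedCount_empty _ _)
    (weightedCount_prefixGain_le hf0 hmono hsub l)

/-- Boosting the marginal gains `δᵢ` along a fixed ordered sequence of
elements by a factor `γ − 1` yields a valid `γ`-perturbation of a nonnegative monotone
submodular function `f`. -/
theorem marginal_boost_isPerturbation
    {α : Type*} [Fintype α] [DecidableEq α]
    (f : Finset α → ℝ) (hf0 : ∀ S : Finset α, 0 ≤ f S)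
    (hmono : MonotoneFn f) (hsub : SubmodularFn f)
    (γ : ℝ) (hγ : 1 ≤ γ) (l : List α) :
    IsPerturbation γ f (fun S =>
      f S + (γ - 1) * ∑ i : Fin l.length,
        if l.get i ∈ S then
          f (l.take (i.val + 1)).toFinset - f (l.take i.val).toFinset
        else 0) :=
  marginal_boost_isPerturbation_general f hf0 hmono hsub γ hγ l
end

section
/- Let (X, I) be a p-extendible independence system (p a positive integer), f : 2^X → ℝ≥0 monotone submodular, and 0 < α ≤ 1. Suppose e₁, …, e_k is an α-approximate greedy run: Sᵢ = {e₁,…,eᵢ} ∈ I for all i, each eᵢ satisfies f_{S_{i−1}}(eᵢ) ≥ α · max{ f_{S_{i−1}}(e) : e ∉ S_{i−1}, S_{i−1} ∪ {e} ∈ I }, and S_k is a maximal independent set. If the instance is ((p+α)/α)-stable with unique optimal solution S*, then S_k = S*. -/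
open Finset

/-- The submodular instance `(I, f)` is `γ`-stable with (unique) optimal solution `S`:
for every `γ`-perturbation `f'` of `f`, `S` is the unique maximizer of `f'` over `I`. -/
def SubmodStable {α : Type*} [DecidableEq α] (I : Finset α → Prop)
    (f : Finset α → ℝ) (γ : ℝ) (S : Finset α) : Prop :=
  I S ∧ ∀ f' : Finset α → ℝ, IsPerturbation γ f f' →
    ∀ T : Finset α, I T → T ≠ S → f' T < f' S

/-- An `a`-approximate greedy run for a set function `f`: every prefix is independent,
each `eᵢ` has marginal value at least `a` times that of any feasible addition, and the
final set is maximal. -/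
def ApproxGreedyRunSub {α : Type*} [DecidableEq α] (I : Finset α → Prop)
    (f : Finset α → ℝ) (a : ℝ) (l : List α) : Prop :=
  (∀ i : Fin l.length,
    l.get i ∉ (l.take i.val).toFinset ∧
    I (insert (l.get i) (l.take i.val).toFinset) ∧
    ∀ e : α, e ∉ (l.take i.val).toFinset → I (insert e (l.take i.val).toFinset) →
      a * (f (insert e (l.take i.val).toFinset) - f (l.take i.val).toFinset) ≤
        f (insert (l.get i) (l.take i.val).toFinset) - f (l.take i.val).toFinset) ∧
  ∀ e : α, e ∉ l.toFinset → ¬ I (insert e l.toFinset)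

/-!
Let `Δᵢ` be the gain of the `i`-th greedy step and `w(T) = ∑_{eᵢ ∈ T} Δᵢ`. Since `w ≤ f` and
`w` is modular with `w({e}) ≤ f({e})`, `f + (p/a) w` is a `((p+a)/a)`-perturbation of `f`.
Walk through the run keeping an independent `U` with `Sᵢ ⊆ U ⊆ Sᵢ ∪ S*` and `S* ∩ Sₖ ⊆ U`: when
`eᵢ ∉ U`, `p`-extendibility evicts at most `p` elements of `S* \ Sₖ`, each of marginal value at most
`Δᵢ / a` on `Sₖ`, and this happens only when `eᵢ ∉ S*`. At the end `U = Sₖ` by maximality, so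
`f(S*) ≤ f(Sₖ) + ∑_{S* \ Sₖ} f_{Sₖ} ≤ f(Sₖ) + (p/a) ∑_{eᵢ ∉ S*} Δᵢ`, i.e. `S*` is no better than
`Sₖ` for the perturbation, and stability forces `Sₖ = S*`.
-/

namespace SubmodularFn

variable {α : Type*} [DecidableEq α] {f : Finset α → ℝ}

theorem marginal_le_of_subset (hsub : SubmodularFn f) {A B : Finset α} {t : α}
    (hAB : A ⊆ B) (ht : t ∉ B) : f (insert t B) - f B ≤ f (insert t A) - f A := by
  have h := hsub (insert t A) B
  rw [insert_union, union_eq_right.2 hAB, insert_inter_of_notMem ht,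
    inter_eq_left.2 hAB] at h
  linarith

theorem le_add_sum_marginal (hsub : SubmodularFn f) (B C : Finset α) :
    f (B ∪ C) ≤ f B + ∑ t ∈ C \ B, (f (insert t B) - f B) := by
  induction C using Finset.induction_on with
  | empty => simp
  | @insert x C hx ih =>
    by_cases hxB : x ∈ B
    · rwa [union_insert, insert_eq_of_mem (mem_union_left _ hxB),
        insert_sdiff_of_mem _ hxB]
    · have hxBC : x ∉ B ∪ C := by simp [hxB, hx]
      rw [union_insert, insert_sdiff_of_notMem _ hxB,
        sum_insert fun h => hx (mem_sdiff.1 h).1]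
      linarith [hsub.marginal_le_of_subset subset_union_left hxBC]

end SubmodularFn

section Perturbation

variable {α : Type*} [DecidableEq α] {f : Finset α → ℝ}

theorem isPerturbation_add_mul_sum (hf0 : ∀ S, 0 ≤ f S) (hmono : MonotoneFn f)
    (hsub : SubmodularFn f) {δ : α → ℝ} (hδ0 : ∀ t, 0 ≤ δ t)
    (hδf : ∀ S, ∑ t ∈ S, δ t ≤ f S) {c : ℝ} (hc : 0 ≤ c) :
    IsPerturbation (c + 1) f (fun S => f S + c * ∑ t ∈ S, δ t) := by
  have hsum0 (S : Finset α) : 0 ≤ c * ∑ t ∈ S, δ t :=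
    mul_nonneg hc (sum_nonneg fun t _ => hδ0 t)
  refine ⟨fun S => add_nonneg (hf0 S) (hsum0 S), fun A B hAB => ?_, fun A B => ?_,
    fun S => ⟨?_, ?_⟩, fun S j hj => ⟨?_, ?_⟩⟩
  · dsimp only
    gcongr
    exacts [hmono A B hAB, fun t _ _ => hδ0 t]
  · have hδ := sum_union_inter (s₁ := A) (s₂ := B) (f := δ)
    linear_combination hsub A B + c * hδ
  · linarith [hsum0 S]
  · nlinarith [hδf S]
  · simp only [sum_insert hj]
    linarith [mul_nonneg hc (hδ0 j)]
  · have hj1 : δ j ≤ f {j} := by simpa using hδf {j}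
    simp only [sum_insert hj, add_sub_cancel_right]
    nlinarith

end Perturbation

section GreedyRun

variable {α : Type*} [DecidableEq α] {I : Finset α → Prop} {f : Finset α → ℝ} {a : ℝ}

def IsApproxGreedyStep (I : Finset α → Prop) (f : Finset α → ℝ) (a : ℝ)
    (S : Finset α) (e : α) : Prop :=
  e ∉ S ∧ I (insert e S) ∧
    ∀ e' ∉ S, I (insert e' S) → a * (f (insert e' S) - f S) ≤ f (insert e S) - f S

/-- The steps of a greedy run listed from the last one backwards, so that `e :: r` is the run
`r` followed by `e`. -/
def ApproxGreedySteps (I : Finset α → Prop) (f : Finset α → ℝ) (a : ℝ) : List α → Prop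
  | [] => True
  | e :: r => ApproxGreedySteps I f a r ∧ IsApproxGreedyStep I f a r.toFinset e

theorem approxGreedySteps_reverse {l : List α}
    (h : ∀ i : Fin l.length, IsApproxGreedyStep I f a (l.take i).toFinset (l.get i)) :
    ApproxGreedySteps I f a l.reverse := by
  induction l using List.reverseRecOn with
  | nil => trivial
  | append_singleton l e ih =>
    rw [List.reverse_append, List.reverse_singleton, List.singleton_append]
    refine ⟨ih fun i => ?_, ?_⟩
    · have := h ⟨i, by simp⟩
      simpa [List.take_append_of_le_length i.isLt.le] using this
    · simpa using h ⟨l.length, by simp⟩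

namespace ApproxGreedySteps

theorem nodup : ∀ {r : List α}, ApproxGreedySteps I f a r → r.Nodup
  | [], _ => List.nodup_nil
  | _ :: _, ⟨hr, he, _⟩ => List.nodup_cons.2 ⟨by simpa using he, hr.nodup⟩

theorem indep (hI : I ∅) : ∀ {r : List α}, ApproxGreedySteps I f a r → I r.toFinset
  | [], _ => hI
  | _ :: _, ⟨_, _, he, _⟩ => by simpa using he

end ApproxGreedySteps

end GreedyRun

section RunGain

variable {α : Type*} [DecidableEq α] {f : Finset α → ℝ}

def runGain (f : Finset α → ℝ) : List α → α → ℝ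
  | [] => 0
  | e :: r => runGain f r + Pi.single e (f (insert e r.toFinset) - f r.toFinset)

theorem runGain_nonneg (hmono : MonotoneFn f) : ∀ r : List α, 0 ≤ runGain f r
  | [] => le_rfl
  | e :: r => add_nonneg (runGain_nonneg hmono r)
      (Pi.single_nonneg.2 (sub_nonneg.2 (hmono _ _ (subset_insert e _))))

theorem runGain_eq_zero_of_notMem : ∀ {r : List α} {t : α}, t ∉ r → runGain f r t = 0
  | [], _, _ => rfl
  | e :: r, t, ht => by
    rw [List.mem_cons, not_or] at ht
    simp [runGain, runGain_eq_zero_of_notMem ht.2, ht.1]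

theorem sum_runGain_cons (e : α) (r : List α) (S : Finset α) :
    ∑ t ∈ S, runGain f (e :: r) t = ∑ t ∈ S, runGain f r t +
      if e ∈ S then f (insert e r.toFinset) - f r.toFinset else 0 := by
  simp [runGain, sum_add_distrib, sum_pi_single']

theorem sum_runGain_le_sub (hsub : SubmodularFn f) :
    ∀ {r : List α}, r.Nodup → ∀ S : Finset α,
      ∑ t ∈ S, runGain f r t ≤ f (S ∩ r.toFinset) - f ∅
  | [], _, S => by simp [runGain]
  | e :: r, hr, S => by
    rw [List.nodup_cons] at hr
    have ih := sum_runGain_le_sub hsub hr.2 S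
    rw [sum_runGain_cons, List.toFinset_cons]
    split_ifs with heS
    · rw [inter_insert_of_mem heS]
      linarith [hsub.marginal_le_of_subset (inter_subset_right (s₁ := S))
        (mt List.mem_toFinset.1 hr.1)]
    · rwa [inter_insert_of_notMem heS, add_zero]

theorem sum_runGain_le_self (hf0 : 0 ≤ f ∅) (hmono : MonotoneFn f) (hsub : SubmodularFn f)
    {r : List α} (hr : r.Nodup) (S : Finset α) : ∑ t ∈ S, runGain f r t ≤ f S := by
  linarith [sum_runGain_le_sub hsub hr S, hmono (S ∩ r.toFinset) S inter_subset_left]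

theorem sum_runGain_cons_sdiff (e : α) (r : List α) (T : Finset α) :
    ∑ t ∈ (e :: r).toFinset \ T, runGain f (e :: r) t = ∑ t ∈ r.toFinset \ T, runGain f r t +
      if e ∈ T then 0 else f (insert e r.toFinset) - f r.toFinset := by
  have hrT : r.toFinset \ T ⊆ (e :: r).toFinset \ T :=
    sdiff_subset_sdiff (by simp [subset_insert]) le_rfl
  rw [sum_runGain_cons, ← sum_subset hrT fun t ht htr => runGain_eq_zero_of_notMem ?_]
  · by_cases heT : e ∈ T <;> simp [heT]
  · simp_all

theorem add_mul_sum_runGain_le (hmono : MonotoneFn f) (hsub : SubmodularFn f) {r : List α}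
    {T : Finset α} {c : ℝ}
    (hcharge : ∑ t ∈ T \ r.toFinset, (f (insert t r.toFinset) - f r.toFinset) ≤
      c * ∑ t ∈ r.toFinset \ T, runGain f r t) :
    f T + c * ∑ t ∈ T, runGain f r t ≤ f r.toFinset + c * ∑ t ∈ r.toFinset, runGain f r t := by
  have hT :
      f T ≤ f r.toFinset + ∑ t ∈ T \ r.toFinset, (f (insert t r.toFinset) - f r.toFinset) :=
    (hmono _ _ subset_union_right).trans (hsub.le_add_sum_marginal _ _)
  have hoff : ∑ t ∈ T \ r.toFinset, runGain f r t = 0 :=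
    sum_eq_zero fun t ht => runGain_eq_zero_of_notMem (by simpa using (mem_sdiff.1 ht).2)
  rw [← sum_inter_add_sum_sdiff T r.toFinset, ← sum_inter_add_sum_sdiff r.toFinset T, hoff,
    inter_comm]
  linarith

end RunGain

section Charging

variable {α : Type*} [DecidableEq α] {I : Finset α → Prop} {f : Finset α → ℝ} {a : ℝ}
  {p : ℕ} {L S T U : Finset α} {e : α}

theorem IsApproxGreedyStep.mul_marginal_le (he : IsApproxGreedyStep I f a S e)
    (hsub : SubmodularFn f) (ha : 0 ≤ a) (hSL : S ⊆ L) {z : α} (hz : z ∉ L)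
    (hIz : I (insert z S)) : a * (f (insert z L) - f L) ≤ f (insert e S) - f S :=
  (mul_le_mul_of_nonneg_left (hsub.marginal_le_of_subset hSL hz) ha).trans
    (he.2.2 z (fun h => hz (hSL h)) hIz)

/-- `p`-extendibility applied to `S ∪ (T ∩ L) ⊆ U` removes a set `Z ⊆ T \ L` of at most `p`
elements; each was a feasible candidate when `e` was chosen, so its marginal value is at most
`1 / a` times the gain of `e`. -/
theorem IsApproxGreedyStep.exists_exchange (he : IsApproxGreedyStep I f a S e)
    (hdc : DownClosed I) (hext : Extendible p I) (hmono : MonotoneFn f) (hsub : SubmodularFn f)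
    (ha : 0 < a) (hL : I L) (heL : e ∈ L) (hSL : S ⊆ L) (hU : I U) (hSU : S ⊆ U)
    (hUST : U ⊆ S ∪ T) (hTLU : T ∩ L ⊆ U) (heU : e ∉ U) :
    ∃ U', I U' ∧ insert e S ⊆ U' ∧ U' ⊆ insert e S ∪ T ∧ T ∩ L ⊆ U' ∧
      ∑ t ∈ T \ U', (f (insert t L) - f L) ≤
        ∑ t ∈ T \ U, (f (insert t L) - f L) + p / a * (f (insert e S) - f S) := by
  have heT : e ∉ T := fun h => heU (hTLU (mem_inter.2 ⟨h, heL⟩))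
  have hAL : S ∪ T ∩ L ⊆ L := union_subset hSL inter_subset_right
  obtain ⟨Z, hZ, hZp, hIU'⟩ := hext (S ∪ T ∩ L) U e (union_subset hSU hTLU)
    (hdc.2 _ _ hL hAL) hU (hdc.2 _ _ hL (insert_subset heL hAL))
  have hZmem : ∀ z ∈ Z, z ∈ U ∧ z ∈ T ∧ z ∉ L ∧ z ∉ S := fun z hz => by
    have := hZ hz
    have := @hUST z
    simp only [mem_sdiff, mem_union, mem_inter] at *
    tauto
  have hsplit : T \ insert e (U \ Z) = T \ U ∪ Z := by
    ext y
    have := hZmem y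
    simp only [mem_sdiff, mem_insert, mem_union]
    grind
  have hdisj : Disjoint (T \ U) Z :=
    disjoint_left.2 fun y hy hyZ => (mem_sdiff.1 hy).2 (hZmem y hyZ).1
  have hZsum : a * ∑ z ∈ Z, (f (insert z L) - f L) ≤ p * (f (insert e S) - f S) := by
    rw [mul_sum]
    calc ∑ z ∈ Z, a * (f (insert z L) - f L)
        ≤ Z.card • (f (insert e S) - f S) := by
          refine sum_le_card_nsmul _ _ _ fun z hz => ?_
          obtain ⟨hzU, -, hzL, -⟩ := hZmem z hz
          exact he.mul_marginal_le hsub ha.le hSL hzL (hdc.2 _ _ hU (insert_subset hzU hSU))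
      _ ≤ p * (f (insert e S) - f S) := by
          rw [nsmul_eq_mul]
          gcongr
          exact sub_nonneg.2 (hmono _ _ (subset_insert e S))
  refine ⟨insert e (U \ Z), hIU', ?_, ?_, ?_, ?_⟩
  · exact insert_subset_insert e fun y hy => mem_sdiff.2 ⟨hSU hy, fun h => (hZmem y h).2.2.2 hy⟩
  · refine insert_subset (mem_union_left _ (mem_insert_self e S)) fun y hy => ?_
    exact mem_union.2 ((mem_union.1 (hUST (mem_sdiff.1 hy).1)).imp_left (mem_insert_of_mem ·))
  · exact fun y hy => mem_insert_of_mem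
      (mem_sdiff.2 ⟨hTLU hy, fun h => (hZmem y h).2.2.1 (mem_inter.1 hy).2⟩)
  · rw [hsplit, sum_union hdisj, div_mul_eq_mul_div]
    gcongr
    rwa [le_div_iff₀ ha, mul_comm]

theorem ApproxGreedySteps.exists_charge (hdc : DownClosed I) (hext : Extendible p I)
    (hmono : MonotoneFn f) (hsub : SubmodularFn f) (ha : 0 < a) (hL : I L) (hT : I T) :
    ∀ {r : List α}, ApproxGreedySteps I f a r → r.toFinset ⊆ L →
      ∃ U, I U ∧ r.toFinset ⊆ U ∧ U ⊆ r.toFinset ∪ T ∧ T ∩ L ⊆ U ∧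
        ∑ t ∈ T \ U, (f (insert t L) - f L) ≤ p / a * ∑ t ∈ r.toFinset \ T, runGain f r t
  | [], _, _ => ⟨T, hT, by simp, by simp, inter_subset_left, by simp⟩
  | e :: r, ⟨hr, he⟩, hrL => by
    rw [List.toFinset_cons, insert_subset_iff] at hrL
    obtain ⟨U, hU, hrU, hUrT, hTLU, hcharge⟩ :=
      exists_charge hdc hext hmono hsub ha hL hT hr hrL.2
    have hgain : 0 ≤ f (insert e r.toFinset) - f r.toFinset :=
      sub_nonneg.2 (hmono _ _ (subset_insert _ _))
    have hpa : 0 ≤ (p : ℝ) / a := by positivity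
    rw [sum_runGain_cons_sdiff, List.toFinset_cons]
    by_cases heU : e ∈ U
    · refine ⟨U, hU, insert_subset heU hrU,
        hUrT.trans (union_subset_union_left (subset_insert _ _)), hTLU, hcharge.trans ?_⟩
      gcongr
      split_ifs <;> linarith
    · have heT : e ∉ T := fun h => heU (hTLU (mem_inter.2 ⟨h, hrL.1⟩))
      obtain ⟨U', hU', hrU', hU'rT, hTLU', hcharge'⟩ :=
        he.exists_exchange hdc hext hmono hsub ha hL hrL.1 hrL.2 hU hrU hUrT hTLU heU
      refine ⟨U', hU', hrU', hU'rT, hTLU', hcharge'.trans ?_⟩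
      rw [if_neg heT, mul_add]
      linarith

end Charging

theorem approx_greedy_recovers_submodular_pExtendible_general
    {α : Type*} [DecidableEq α] (p : ℕ)
    (I : Finset α → Prop) (hdc : DownClosed I) (hext : Extendible p I)
    (f : Finset α → ℝ) (hf0 : ∀ S : Finset α, 0 ≤ f S)
    (hmono : MonotoneFn f) (hsub : SubmodularFn f)
    (a : ℝ) (ha0 : 0 < a)
    (Sstar : Finset α) (hstable : SubmodStable I f (((p : ℝ) + a) / a) Sstar)
    (l : List α) (hl : ApproxGreedyRunSub I f a l) :
    l.toFinset = Sstar := by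
  have hrun : ApproxGreedySteps I f a l.reverse := approxGreedySteps_reverse hl.1
  have hmax := hl.2
  rw [← List.toFinset_reverse] at hmax ⊢
  set L := l.reverse.toFinset
  have hL : I L := hrun.indep hdc.1
  obtain ⟨U, hU, hLU, -, -, hcharge⟩ :=
    hrun.exists_charge hdc hext hmono hsub ha0 hL hstable.1 le_rfl
  have hUL : U = L := by
    refine Subset.antisymm (fun u hu => ?_) hLU
    by_contra huL
    exact hmax u huL (hdc.2 _ _ hU (insert_subset hu hLU))
  rw [hUL] at hcharge
  have hpert := isPerturbation_add_mul_sum hf0 hmono hsub (runGain_nonneg hmono l.reverse)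
    (sum_runGain_le_self (hf0 ∅) hmono hsub hrun.nodup) (c := p / a) (by positivity)
  rw [div_add_one ha0.ne'] at hpert
  by_contra hne
  exact (add_mul_sum_runGain_le hmono hsub hcharge).not_gt (hstable.2 _ hpert L hL hne)

/-- On a `((p+a)/a)`-stable instance of monotone submodular maximization
over a `p`-extendible independence system, every `a`-approximate greedy run outputs the
optimal solution `S*`. -/
theorem approx_greedy_recovers_submodular_pExtendible
    {α : Type*} [Fintype α] [DecidableEq α] (p : ℕ) (hp : 0 < p)
    (I : Finset α → Prop) (hdc : DownClosed I) (hext : Extendible p I)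
    (f : Finset α → ℝ) (hf0 : ∀ S : Finset α, 0 ≤ f S)
    (hmono : MonotoneFn f) (hsub : SubmodularFn f)
    (a : ℝ) (ha0 : 0 < a) (ha1 : a ≤ 1)
    (Sstar : Finset α) (hstable : SubmodStable I f (((p : ℝ) + a) / a) Sstar)
    (l : List α) (hl : ApproxGreedyRunSub I f a l) :
    l.toFinset = Sstar :=
  approx_greedy_recovers_submodular_pExtendible_general p I hdc hext f hf0 hmono hsub a ha0 Sstar
    hstable l hl
end

section
/- Let (X, I) be a matroid, let B₁, B₂, …, B_k be a partition of X, let fᵢ : 2^{Bᵢ} → ℝ≥0 be monotone submodular for each i, and let f(S) = Σ_{i=1}^k fᵢ(S ∩ Bᵢ). Suppose the optimal solution S* of max{ f(S) : S ∈ I } is unique and is 2-stable with respect to individual perturbations of the fᵢ: for every choice of 2-perturbations f̃ᵢ of fᵢ (one for each i), S* is the unique maximizer of Σᵢ f̃ᵢ(S ∩ Bᵢ) over I. Then every greedy run (repeatedly adding a feasible element of maximum marginal value of f until the set is maximal) outputs S*. -/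
open Finset

/-- `I` is (the family of independent sets of) a matroid: downward closed, contains `∅`,
and satisfies the exchange axiom. -/
def IsMatroidFam {α : Type*} [DecidableEq α] (I : Finset α → Prop) : Prop :=
  I ∅ ∧ (∀ A B : Finset α, I A → B ⊆ A → I B) ∧
  ∀ A B : Finset α, I A → I B → A.card < B.card →
    ∃ e ∈ B, e ∉ A ∧ I (insert e A)
/-- A greedy run for a set function `f`: every prefix is independent, each `eᵢ`
maximizes the marginal value among feasible additions, and the final set is maximal. -/
def GreedyRunSub {α : Type*} [DecidableEq α] (I : Finset α → Prop)
    (f : Finset α → ℝ) (l : List α) : Prop :=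
  (∀ i : Fin l.length,
    l.get i ∉ (l.take i.val).toFinset ∧
    I (insert (l.get i) (l.take i.val).toFinset) ∧
    ∀ e : α, e ∉ (l.take i.val).toFinset → I (insert e (l.take i.val).toFinset) →
      f (insert e (l.take i.val).toFinset) - f (l.take i.val).toFinset ≤
        f (insert (l.get i) (l.take i.val).toFinset) - f (l.take i.val).toFinset) ∧
  ∀ e : α, e ∉ l.toFinset → ¬ I (insert e l.toFinset)

/-- `f'` is a `γ`-perturbation of `f` as functions on subsets of the block `B`:
nonnegative, monotone and submodular on `2^B`, pointwise within `[f, γ·f]`, and with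
marginal values increased by at most `(γ−1)·f({j})`. -/
def PerturbationOn {α : Type*} [DecidableEq α] (B : Finset α) (γ : ℝ)
    (f f' : Finset α → ℝ) : Prop :=
  (∀ S : Finset α, S ⊆ B → 0 ≤ f' S) ∧
  (∀ S T : Finset α, S ⊆ T → T ⊆ B → f' S ≤ f' T) ∧
  (∀ S T : Finset α, S ⊆ B → T ⊆ B → f' (S ∪ T) + f' (S ∩ T) ≤ f' S + f' T) ∧
  (∀ S : Finset α, S ⊆ B → f S ≤ f' S ∧ f' S ≤ γ * f S) ∧
  ∀ S : Finset α, S ⊆ B → ∀ j ∈ B, j ∉ S →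
    f (insert j S) - f S ≤ f' (insert j S) - f' S ∧
    (f' (insert j S) - f' S) - (f (insert j S) - f S) ≤ (γ - 1) * f {j}

/-! Adding `fᵢ (· ∩ C)` to every `fᵢ` is a `2`-perturbation, so for every `C` the optimum `S*`
strictly beats every other independent set for the objective `f + f (· ∩ C)`. With `C = ∅`
this makes `S*` the unique maximizer of `f`, hence a basis. Suppose the greedy run first leaves
`S*` by choosing `e ∉ S*` after a prefix `P ⊆ S*`. Augmenting `P + e` to a basis gives
`A + e` independent with `P ⊆ A` and `S* = A + d`. Diminishing returns and the greedy choice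
yield `f S* - f A ≤ f_P(d) ≤ f_P(e) ≤ f {e} - f ∅`, while `f A ≤ f (A + e)`; this contradicts
the stability of `S*` for `C = {e}`, which reads `f (A + e) + f {e} < f S* + f ∅`. -/

section

variable {α : Type*} [DecidableEq α]

namespace IsMatroidFam

variable {I : Finset α → Prop}

theorem exists_superset_card_eq (hI : IsMatroidFam I) {C D : Finset α} (hC : I C) (hD : I D)
    (hCD : #C ≤ #D) : ∃ C', I C' ∧ C ⊆ C' ∧ C' ⊆ C ∪ D ∧ #C' = #D := by
  induction h : #D - #C generalizing C with
  | zero => exact ⟨C, hC, subset_rfl, subset_union_left, by omega⟩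
  | succ n ih =>
    obtain ⟨x, hxD, hxC, hxI⟩ := hI.2.2 C D hC hD (by omega)
    have hcard := card_insert_of_notMem hxC
    obtain ⟨C', hC', hxCC', hC'D, hcard'⟩ := ih hxI (by omega) (by omega)
    refine ⟨C', hC', (subset_insert x C).trans hxCC', hC'D.trans ?_, hcard'⟩
    exact union_subset (insert_subset (mem_union_right C hxD) subset_union_left)
      subset_union_right

theorem exists_insert_eq_of_insert_indep (hI : IsMatroidFam I) {P S : Finset α} {e : α}
    (hS : I S) (hPS : P ⊆ S) (heS : e ∉ S) (hPe : I (insert e P)) (hcard : #P < #S) :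
    ∃ A d, P ⊆ A ∧ I (insert e A) ∧ d ∉ A ∧ insert d A = S := by
  have heP : e ∉ P := fun h => heS (hPS h)
  obtain ⟨T, hT, hPT, hTS, hTcard⟩ :=
    hI.exists_superset_card_eq hPe hS (by rw [card_insert_of_notMem heP]; omega)
  have heT : e ∈ T := hPT (mem_insert_self e P)
  have hAS : T.erase e ⊆ S := fun x hx => by
    obtain ⟨hxe, hxT⟩ := mem_erase.1 hx
    rcases mem_union.1 (hTS hxT) with hxP | hxS
    · exact hPS ((mem_insert.1 hxP).resolve_left hxe)
    · exact hxS
  have hAcard : #(T.erase e) + 1 = #S := by rw [card_erase_of_mem heT]; omega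
  obtain ⟨d, hdA, hdS⟩ := exists_eq_insert_iff.2 ⟨hAS, hAcard⟩
  refine ⟨T.erase e, d, fun x hx => ?_, by rwa [insert_erase heT], hdA, hdS⟩
  exact mem_erase.2 ⟨ne_of_mem_of_not_mem hx heP, hPT (mem_insert_of_mem hx)⟩

theorem eq_of_subset_of_maximal (hI : IsMatroidFam I) {T S : Finset α} (hS : I S) (hT : I T)
    (hTS : T ⊆ S) (hmax : ∀ e ∉ T, ¬ I (insert e T)) : T = S := by
  refine eq_of_subset_of_card_le hTS (not_lt.1 fun hlt => ?_)
  obtain ⟨e, -, heT, heI⟩ := hI.2.2 T S hT hS hlt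
  exact hmax e heT heI

end IsMatroidFam

def IsSubmodular (F : Finset α → ℝ) : Prop :=
  ∀ S T, F (S ∪ T) + F (S ∩ T) ≤ F S + F T

theorem IsSubmodular.marginal_le_of_subset {F : Finset α → ℝ} (hF : IsSubmodular F)
    {A C : Finset α} {x : α} (hAC : A ⊆ C) (hxC : x ∉ C) :
    F (insert x C) - F C ≤ F (insert x A) - F A := by
  have h := hF (insert x A) C
  rw [insert_union, union_eq_right.2 hAC, insert_inter_of_notMem hxC, inter_eq_left.2 hAC] at h
  linarith

section BlockSum

variable {ι : Type*} [Fintype ι] {B : ι → Finset α} {f : ι → Finset α → ℝ}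

theorem monotone_sum_inter (hmono : ∀ i, ∀ S T : Finset α, S ⊆ T → T ⊆ B i → f i S ≤ f i T) :
    Monotone fun S => ∑ i, f i (S ∩ B i) := fun _ _ hST =>
  sum_le_sum fun i _ => hmono i _ _ (inter_subset_inter hST subset_rfl) inter_subset_right

theorem isSubmodular_sum_inter
    (hsub : ∀ i, ∀ S T : Finset α, S ⊆ B i → T ⊆ B i →
      f i (S ∪ T) + f i (S ∩ T) ≤ f i S + f i T) :
    IsSubmodular fun S => ∑ i, f i (S ∩ B i) := fun _ _ => by
  simp only [← sum_add_distrib]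
  refine sum_le_sum fun i _ => ?_
  rw [union_inter_distrib_right, inter_inter_distrib_right]
  exact hsub i _ _ inter_subset_right inter_subset_right

end BlockSum

theorem perturbationOn_two_add_inter {B : Finset α} {f : Finset α → ℝ}
    (hf0 : ∀ S : Finset α, S ⊆ B → 0 ≤ f S)
    (hmono : ∀ S T : Finset α, S ⊆ T → T ⊆ B → f S ≤ f T)
    (hsub : ∀ S T : Finset α, S ⊆ B → T ⊆ B → f (S ∪ T) + f (S ∩ T) ≤ f S + f T)
    (C : Finset α) : PerturbationOn B 2 f fun S => f S + f (S ∩ C) := by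
  have hSC : ∀ S ⊆ B, S ∩ C ⊆ B := fun S hS => inter_subset_left.trans hS
  refine ⟨fun S hS => ?_, fun S T hST hT => ?_, fun S T hS hT => ?_, fun S hS => ?_,
    fun S hS j hj hjS => ?_⟩
  · exact add_nonneg (hf0 S hS) (hf0 _ (hSC S hS))
  · exact add_le_add (hmono S T hST hT) (hmono _ _ (inter_subset_inter hST subset_rfl) (hSC T hT))
  · have h := hsub _ _ (hSC S hS) (hSC T hT)
    rw [← union_inter_distrib_right, ← inter_inter_distrib_right] at h
    linarith [hsub S T hS hT]
  · constructor <;> linarith [hf0 _ (hSC S hS), hmono (S ∩ C) S inter_subset_left hS]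
  · by_cases hjC : j ∈ C
    · have hj' : insert j (S ∩ C) ⊆ B := insert_subset hj (hSC S hS)
      have h := hsub (S ∩ C) {j} (hSC S hS) (singleton_subset_iff.2 hj)
      rw [union_comm, ← insert_eq, inter_singleton_of_notMem fun h => hjS (mem_of_mem_inter_left h)]
        at h
      simp only [insert_inter_of_mem hjC]
      constructor <;>
        linarith [hf0 ∅ (empty_subset B), hmono _ _ (subset_insert j (S ∩ C)) hj']
    · simp only [insert_inter_of_notMem hjC]
      constructor <;> linarith [hf0 {j} (singleton_subset_iff.2 hj)]

def IsStableMaximizer (I : Finset α → Prop) (F : Finset α → ℝ) (S : Finset α) : Prop :=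
  I S ∧ ∀ C T : Finset α, I T → T ≠ S → F T + F (T ∩ C) < F S + F (S ∩ C)

theorem isStableMaximizer_sum_inter {ι : Type*} [Fintype ι] {I : Finset α → Prop}
    {B : ι → Finset α} {f : ι → Finset α → ℝ}
    (hf0 : ∀ i, ∀ S : Finset α, S ⊆ B i → 0 ≤ f i S)
    (hmono : ∀ i, ∀ S T : Finset α, S ⊆ T → T ⊆ B i → f i S ≤ f i T)
    (hsub : ∀ i, ∀ S T : Finset α, S ⊆ B i → T ⊆ B i →
      f i (S ∪ T) + f i (S ∩ T) ≤ f i S + f i T)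
    {S : Finset α} (hS : I S)
    (hstable : ∀ f' : ι → Finset α → ℝ, (∀ i, PerturbationOn (B i) 2 (f i) (f' i)) →
      ∀ T : Finset α, I T → T ≠ S → ∑ i, f' i (T ∩ B i) < ∑ i, f' i (S ∩ B i)) :
    IsStableMaximizer I (fun S => ∑ i, f i (S ∩ B i)) S := by
  refine ⟨hS, fun C T hT hTS => ?_⟩
  have h := hstable (fun i S => f i S + f i (S ∩ C))
    (fun i => perturbationOn_two_add_inter (hf0 i) (hmono i) (hsub i) C) T hT hTS
  simpa only [sum_add_distrib, inter_right_comm _ (B _) C] using h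

namespace IsStableMaximizer

variable {I : Finset α → Prop} {F : Finset α → ℝ} {S : Finset α}

theorem not_indep_insert (hS : IsStableMaximizer I F S) (hmono : Monotone F) {x : α}
    (hx : x ∉ S) : ¬ I (insert x S) := fun hxS => by
  have h := hS.2 ∅ _ hxS (fun h => hx (h ▸ mem_insert_self x S))
  simp only [inter_empty] at h
  linarith [hmono (subset_insert x S)]

theorem add_singleton_lt (hS : IsStableMaximizer I F S) {T : Finset α} {e : α} (hT : I T)
    (heT : e ∈ T) (heS : e ∉ S) : F T + F {e} < F S + F ∅ := by
  have h := hS.2 {e} T hT (fun h => heS (h ▸ heT))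
  rwa [inter_singleton_of_mem heT, inter_singleton_of_notMem heS] at h

theorem mem_of_greedy_choice (hS : IsStableMaximizer I F S) (hI : IsMatroidFam I)
    (hmono : Monotone F) (hsub : IsSubmodular F) {P : Finset α} {e : α} (hPS : P ⊆ S)
    (heP : e ∉ P) (hPe : I (insert e P))
    (hgreedy : ∀ d ∉ P, I (insert d P) → F (insert d P) - F P ≤ F (insert e P) - F P) :
    e ∈ S := by
  by_contra heS
  have hPneS : P ≠ S := by
    rintro rfl
    exact hS.not_indep_insert hmono heS hPe
  obtain ⟨A, d, hPA, hAe, hdA, rfl⟩ := hI.exists_insert_eq_of_insert_indep hS.1 hPS heS hPe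
    (card_lt_card (hPS.ssubset_of_ne hPneS))
  have hdP : d ∉ P := fun h => hdA (hPA h)
  have hd := hsub.marginal_le_of_subset hPA hdA
  have hde := hgreedy d hdP (hI.2.1 _ _ hS.1 (insert_subset_insert d hPA))
  have he := hsub.marginal_le_of_subset (empty_subset P) heP
  rw [insert_empty] at he
  linarith [hmono (subset_insert e A), hS.add_singleton_lt hAe (mem_insert_self e A) heS]

theorem toFinset_subset_of_greedyRun (hS : IsStableMaximizer I F S) (hI : IsMatroidFam I)
    (hmono : Monotone F) (hsub : IsSubmodular F) {l : List α} (hl : GreedyRunSub I F l) :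
    l.toFinset ⊆ S := by
  suffices ∀ n ≤ l.length, (l.take n).toFinset ⊆ S by simpa using this l.length le_rfl
  intro n
  induction n with
  | zero => simp
  | succ n ih =>
    intro hn
    obtain ⟨heP, hPe, hgreedy⟩ := hl.1 ⟨n, hn⟩
    have hPS := ih (Nat.le_of_succ_le hn)
    rw [List.take_add_one, List.toFinset_append, List.getElem?_eq_getElem hn]
    simp only [List.get_eq_getElem] at heP hPe hgreedy
    simp only [Option.toList_some, List.toFinset_cons, List.toFinset_nil, insert_empty]
    exact union_subset hPS
      (singleton_subset_iff.2 (hS.mem_of_greedy_choice hI hmono hsub hPS heP hPe hgreedy))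

theorem eq_of_greedyRun (hS : IsStableMaximizer I F S) (hI : IsMatroidFam I)
    (hmono : Monotone F) (hsub : IsSubmodular F) {l : List α} (hl : GreedyRunSub I F l) :
    l.toFinset = S := by
  have hlS := hS.toFinset_subset_of_greedyRun hI hmono hsub hl
  exact hI.eq_of_subset_of_maximal hS.1 (hI.2.1 _ _ hS.1 hlS) hlS hl.2

end IsStableMaximizer

end

theorem greedy_recovers_welfare_maximization_general
    {α : Type*} [DecidableEq α]
    (I : Finset α → Prop) (hmat : IsMatroidFam I)
    (k : ℕ) (B : Fin k → Finset α)
    (f : Fin k → Finset α → ℝ)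
    (hf0 : ∀ i, ∀ S : Finset α, S ⊆ B i → 0 ≤ f i S)
    (hfmono : ∀ i, ∀ S T : Finset α, S ⊆ T → T ⊆ B i → f i S ≤ f i T)
    (hfsub : ∀ i, ∀ S T : Finset α, S ⊆ B i → T ⊆ B i →
      f i (S ∪ T) + f i (S ∩ T) ≤ f i S + f i T)
    (F : Finset α → ℝ) (hF : ∀ S : Finset α, F S = ∑ i : Fin k, f i (S ∩ B i))
    (Sstar : Finset α) (hSstar : I Sstar)
    (hstable : ∀ f' : Fin k → Finset α → ℝ,
      (∀ i, PerturbationOn (B i) 2 (f i) (f' i)) →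
      ∀ T : Finset α, I T → T ≠ Sstar →
        (∑ i : Fin k, f' i (T ∩ B i)) < ∑ i : Fin k, f' i (Sstar ∩ B i))
    (l : List α) (hl : GreedyRunSub I F l) :
    l.toFinset = Sstar := by
  obtain rfl : F = fun S => ∑ i, f i (S ∩ B i) := funext hF
  exact (isStableMaximizer_sum_inter hf0 hfmono hfsub hSstar hstable).eq_of_greedyRun hmat
    (monotone_sum_inter hfmono) (isSubmodular_sum_inter hfsub) hl

/-- Welfare maximization over a matroid: if `f = Σᵢ fᵢ` for monotone
submodular `fᵢ` on the blocks `Bᵢ` of a partition of the ground set, and the optimal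
solution `S*` is `2`-stable with respect to individual `2`-perturbations of the `fᵢ`,
then every greedy run for `f` outputs `S*`. -/
theorem greedy_recovers_welfare_maximization
    {α : Type*} [Fintype α] [DecidableEq α]
    (I : Finset α → Prop) (hmat : IsMatroidFam I)
    (k : ℕ) (B : Fin k → Finset α)
    (hdisj : ∀ i j : Fin k, i ≠ j → Disjoint (B i) (B j))
    (hcover : (Finset.univ : Finset α) = Finset.univ.biUnion B)
    (f : Fin k → Finset α → ℝ)
    (hf0 : ∀ i, ∀ S : Finset α, S ⊆ B i → 0 ≤ f i S)
    (hfmono : ∀ i, ∀ S T : Finset α, S ⊆ T → T ⊆ B i → f i S ≤ f i T)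
    (hfsub : ∀ i, ∀ S T : Finset α, S ⊆ B i → T ⊆ B i →
      f i (S ∪ T) + f i (S ∩ T) ≤ f i S + f i T)
    (F : Finset α → ℝ) (hF : ∀ S : Finset α, F S = ∑ i : Fin k, f i (S ∩ B i))
    (Sstar : Finset α) (hSstar : I Sstar)
    (hstable : ∀ f' : Fin k → Finset α → ℝ,
      (∀ i, PerturbationOn (B i) 2 (f i) (f' i)) →
      ∀ T : Finset α, I T → T ≠ Sstar →
        (∑ i : Fin k, f' i (T ∩ B i)) < ∑ i : Fin k, f' i (Sstar ∩ B i))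
    (l : List α) (hl : GreedyRunSub I F l) :
    l.toFinset = Sstar :=
  greedy_recovers_welfare_maximization_general I hmat k B f hf0 hfmono hfsub F hF Sstar hSstar
    hstable l hl
end

section
/- Let n be a positive even integer, let A be a finite set with |A| = n, let e* ∉ A, let X = A ∪ {e*}, and let I = { S : S ⊆ A } ∪ { S ⊆ X : e* ∈ S and |S ∩ A| ≤ n/2 }. Then: (a) (X, I) is a downward-closed independence system and a 2-system; (b) with weights w(a) = 0 for a ∈ A and w(e*) = 1, the set A is a maximal independent set with w(A) = 0, the maximum of w over I equals 1, and for every Z ⊆ A with |Z| < n/2 the set (A \ Z) ∪ {e*} is not in I (so A is a local optimum under any exchanges that remove fewer than n/2 elements). -/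
open Finset

/-- The `2`-system where a set is independent iff it lies in `A`, or
contains `e*` and at most `n/2` elements of `A`: it is a downward-closed `2`-system, `A`
is a maximal independent set of weight `0` while the optimum weight is `1`, and `A`
cannot be improved by any exchange removing fewer than `n/2` elements. -/
theorem local_search_fails_two_systems
    {α : Type*} [Fintype α] [DecidableEq α]
    (n : ℕ) (hn : 0 < n) (hneven : Even n)
    (estar : α) (A : Finset α) (hA : A.card = n) (he : estar ∉ A)
    (hground : (Finset.univ : Finset α) = insert estar A)
    (I : Finset α → Prop)
    (hI : ∀ S : Finset α, I S ↔ (S ⊆ A ∨ (estar ∈ S ∧ (S ∩ A).card ≤ n / 2)))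
    (w : α → ℝ) (hwA : ∀ a ∈ A, w a = 0) (hwe : w estar = 1) :
    DownClosed I ∧ PSystem 2 I ∧
    (I A ∧ (∀ e : α, e ∉ A → ¬ I (insert e A)) ∧ (∑ e ∈ A, w e) = 0) ∧
    (∀ S : Finset α, I S → ∑ e ∈ S, w e ≤ 1) ∧
    (∃ S : Finset α, I S ∧ ∑ e ∈ S, w e = 1) ∧
    (∀ Z ⊆ A, Z.card < n / 2 → ¬ I (insert estar (A \ Z))) := by

  obtain ⟨k, hk⟩ := hneven
  have hk2 : n / 2 = k := by omega
  have hsub : ∀ S : Finset α, S ⊆ insert estar A := by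
    intro S x hx; rw [← hground]; exact mem_univ x
  have hmemA : ∀ {S : Finset α} {x : α}, x ∈ S → estar ∉ S → x ∈ A := by
    intro S x hx hes
    rcases mem_insert.mp (hsub S hx) with h | h
    · exact absurd (h ▸ hx) hes
    · exact h
  -- cardinality of a set containing estar
  have hcard_mem : ∀ K : Finset α, estar ∈ K → K.card = (K ∩ A).card + 1 := by
    intro K heK
    have : K ∩ A = K.erase estar := by
      ext x
      simp only [mem_inter, mem_erase]
      constructor
      · rintro ⟨hxK, hxA⟩
        exact ⟨fun h => he (h ▸ hxA), hxK⟩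
      · rintro ⟨hne, hxK⟩
        rcases mem_insert.mp (hsub K hxK) with h | h
        · exact absurd h hne
        · exact ⟨hxK, h⟩
    rw [this, card_erase_of_mem heK]
    have : 0 < K.card := card_pos.mpr ⟨estar, heK⟩
    omega
  refine ⟨?_, ?_, ⟨?_, ?_, ?_⟩, ?_, ?_, ?_⟩
  · -- DownClosed
    constructor
    · exact (hI ∅).mpr (Or.inl (empty_subset A))
    · intro S B hS hBS
      rw [hI] at hS
      rw [hI]
      rcases hS with h | ⟨hes, hcard⟩
      · exact Or.inl (hBS.trans h)
      · by_cases heB : estar ∈ B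
        · exact Or.inr ⟨heB, le_trans (card_le_card
            (inter_subset_inter hBS (Finset.Subset.refl A))) hcard⟩
        · exact Or.inl (fun x hx => hmemA hx heB)
  · -- PSystem 2
    intro Y J J' hJ hJ'
    by_cases heY : estar ∈ Y
    · set m := (Y ∩ A).card with hm
      have hmn : m ≤ n := hA ▸ card_le_card inter_subset_right
      have hupper : ∀ K : Finset α, IsBaseOf I Y K → K.card ≤ m + 1 := by
        intro K hK
        have h1 : K ⊆ insert estar (Y ∩ A) := by
          intro x hx
          rcases mem_insert.mp (hsub K hx) with h | h
          · exact mem_insert.mpr (Or.inl h)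
          · exact mem_insert.mpr (Or.inr (mem_inter.mpr ⟨hK.1 hx, h⟩))
        calc K.card ≤ (insert estar (Y ∩ A)).card := card_le_card h1
          _ ≤ m + 1 := card_insert_le _ _
      have hlower : ∀ K : Finset α, IsBaseOf I Y K → min m (n / 2) + 1 ≤ K.card := by
        intro K hK
        obtain ⟨hKY, hKI, hKmax⟩ := hK
        by_cases heK : estar ∈ K
        · have hc := hcard_mem K heK
          by_cases hsubK : Y ∩ A ⊆ K
          · have h1 : Y ∩ A ⊆ K ∩ A := fun x hx =>
              mem_inter.mpr ⟨hsubK hx, (mem_inter.mp hx).2⟩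
            have := card_le_card h1
            omega
          · obtain ⟨e, heYA, heK'⟩ := not_subset.mp hsubK
            have hni := hKmax e (mem_inter.mp heYA).1 heK'
            rw [hI] at hni
            push_neg at hni
            have h2 := hni.2 (mem_insert_of_mem heK)
            have h3 : (insert e K) ∩ A ⊆ insert e (K ∩ A) := by
              intro x hx
              rcases mem_inter.mp hx with ⟨hx1, hx2⟩
              rcases mem_insert.mp hx1 with h | h
              · exact mem_insert.mpr (Or.inl h)
              · exact mem_insert.mpr (Or.inr (mem_inter.mpr ⟨h, hx2⟩))
            have h4 := le_trans (card_le_card h3) (card_insert_le _ _)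
            omega
        · have hni := hKmax estar heY heK
          rw [hI] at hni
          push_neg at hni
          have h2 := hni.2 (mem_insert_self _ _)
          have hKA : K ⊆ A := fun x hx => hmemA hx heK
          have h3 : (insert estar K) ∩ A = K := by
            rw [insert_inter_of_notMem he, inter_eq_left.mpr hKA]
          rw [h3] at h2
          omega
      have h1 := hupper J hJ
      have h2 := hlower J' hJ'
      omega
    · have hYA : Y ⊆ A := fun x hx => hmemA hx heY
      have hbase : ∀ K : Finset α, IsBaseOf I Y K → K = Y := by
        intro K hK
        obtain ⟨hKY, hKI, hKmax⟩ := hK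
        refine Finset.Subset.antisymm hKY (fun x hx => ?_)
        by_contra hxK
        exact hKmax x hx hxK ((hI _).mpr (Or.inl
          (insert_subset (hYA hx) (hKY.trans hYA))))
      rw [hbase J hJ, hbase J' hJ']
      omega
  · exact (hI A).mpr (Or.inl (Finset.Subset.refl A))
  · intro e he' hIe
    rw [hI] at hIe
    rcases hIe with h | ⟨hes, hcard⟩
    · exact he' (h (mem_insert_self _ _))
    · have heq : e = estar := by
        rcases mem_insert.mp hes with h | h
        · exact h.symm
        · exact absurd h he
      subst heq
      have : (insert e A) ∩ A = A := inter_eq_right.mpr (subset_insert _ _)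
      rw [this, hA] at hcard
      omega
  · exact Finset.sum_eq_zero hwA
  · intro S hIS
    have hs : ∑ e ∈ S, w e = ∑ e ∈ S, (if estar = e then (1 : ℝ) else 0) := by
      refine Finset.sum_congr rfl (fun x hx => ?_)
      by_cases hxe : estar = x
      · subst hxe; simp [hwe]
      · have hxA : x ∈ A := by
          rcases mem_insert.mp (hsub S hx) with h | h
          · exact absurd h.symm hxe
          · exact h
        simp [hwA x hxA, hxe]
    rw [hs, Finset.sum_ite_eq]
    split <;> norm_num
  · refine ⟨{estar}, (hI _).mpr (Or.inr ⟨mem_singleton_self _, ?_⟩), by simp [hwe]⟩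
    have : ({estar} : Finset α) ∩ A = ∅ := by
      ext x; simp only [mem_inter, mem_singleton, notMem_empty, iff_false]
      rintro ⟨rfl, h⟩; exact he h
    rw [this]
    simp
  · intro Z hZA hZcard hIc
    rw [hI] at hIc
    rcases hIc with h | ⟨_, hcard⟩
    · exact he (h (mem_insert_self _ _))
    · have h3 : (insert estar (A \ Z)) ∩ A = A \ Z := by
        rw [insert_inter_of_notMem he, inter_eq_left.mpr sdiff_subset]
      rw [h3, card_sdiff_of_subset hZA, hA] at hcard
      have := card_le_card hZA
      omega
end

section
/- Let p ≥ 2 be an integer, ε ∈ (0, p), and n a positive integer such that (p−ε)n is a positive integer. Let A, B be disjoint sets with |A| = n and |B| = (p−ε)n, let X = A ∪ B, and let I = { S ⊆ X : |S ∩ A| + p·|S ∩ B| ≤ |A| or p·|S ∩ A| + |S ∩ B| ≤ |B| }. Set weights w(a) = 1 for a ∈ A and w(b) = p−ε for b ∈ B. Then A ∈ I and B ∈ I, w(B) = (p−ε)²·w(A), and for every Y ⊆ B and Z ⊆ A with |Z| < (ε/p)·n, if (A \ Z) ∪ Y ∈ I then w((A \ Z) ∪ Y) ≤ w(A). In particular,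 A is a local optimum unless the local search explores exchanges of size at least (ε/p)·n. -/
open Finset

/-!
An exchange `S = (A \ Z) ∪ Y` has `|S ∩ A| = n - |Z|` and `|S ∩ B| = |Y|`. It can satisfy the
first constraint only when `p|Y| ≤ |Z|`, and then it gains `(p - ε)|Y| ≤ |Z|` while losing `|Z|`.
The second constraint would force `p(n - |Z|) ≤ (p - ε)n`, i.e. `|Z| ≥ (ε/p)n`.
-/

section Exchange

variable {α : Type*} [DecidableEq α] {A B Y Z : Finset α}

theorem sdiff_union_inter_left (hAB : Disjoint A B) (hY : Y ⊆ B) :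
    (A \ Z ∪ Y) ∩ A = A \ Z := by
  rw [union_inter_distrib_right, inter_eq_left.mpr sdiff_subset,
    disjoint_iff_inter_eq_empty.mp (hAB.symm.mono_left hY), union_empty]

theorem sdiff_union_inter_right (hAB : Disjoint A B) (hY : Y ⊆ B) :
    (A \ Z ∪ Y) ∩ B = Y := by
  rw [union_inter_distrib_right, inter_eq_left.mpr hY,
    disjoint_iff_inter_eq_empty.mp (hAB.mono_left sdiff_subset), empty_union]

theorem sum_sdiff_union_of_eq_one_of_eq {w : α → ℝ} {c : ℝ} (hAB : Disjoint A B)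
    (hY : Y ⊆ B) (hZ : Z ⊆ A) (hwA : ∀ a ∈ A, w a = 1) (hwB : ∀ b ∈ B, w b = c) :
    ∑ e ∈ A \ Z ∪ Y, w e = ((A.card - Z.card : ℕ) : ℝ) + c * Y.card := by
  rw [sum_union (hAB.mono sdiff_subset hY),
    sum_eq_card_nsmul fun a ha => hwA a (mem_sdiff.mp ha).1,
    sum_eq_card_nsmul fun b hb => hwB b (hY hb), card_sdiff_of_subset hZ]
  simp [mul_comm]

end Exchange

section Arithmetic

variable {p n y z : ℕ} {ε : ℝ}

theorem cast_sub_add_mul_le_of_sub_add_mul_le (hε : 0 ≤ ε) (hzn : z ≤ n)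
    (h : n - z + p * y ≤ n) : ((n - z : ℕ) : ℝ) + (p - ε) * y ≤ n := by
  have hpy : ((p * y : ℕ) : ℝ) ≤ z := by exact_mod_cast (by omega : p * y ≤ z)
  have hεy : 0 ≤ ε * y := by positivity
  push_cast [Nat.cast_sub hzn] at hpy ⊢
  linarith

theorem not_mul_sub_add_le {m : ℕ} (hp : 0 < p) (hzn : z ≤ n)
    (hz : (z : ℝ) < ε / p * n) (hm : (m : ℝ) = (p - ε) * n) :
    ¬ p * (n - z) + y ≤ m := by
  intro h
  have hpz : (p : ℝ) * z < ε * n := by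
    rwa [div_mul_eq_mul_div, lt_div_iff₀ (by exact_mod_cast hp), mul_comm] at hz
  have h' : ((p * (n - z) + y : ℕ) : ℝ) ≤ m := by exact_mod_cast h
  push_cast [Nat.cast_sub hzn] at h'
  linarith [(y.cast_nonneg : (0 : ℝ) ≤ y)]

end Arithmetic

theorem local_search_lower_bound_pExtendible_general
    {α : Type*} [DecidableEq α] (p : ℕ) (hp : 2 ≤ p)
    (ε : ℝ) (hε0 : 0 < ε)
    (n m : ℕ) (hmval : (m : ℝ) = ((p : ℝ) - ε) * n)
    (A B : Finset α) (hdisj : Disjoint A B)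
    (hcardA : A.card = n) (hcardB : B.card = m)
    (I : Finset α → Prop)
    (hI : ∀ S : Finset α, I S ↔
      ((S ∩ A).card + p * (S ∩ B).card ≤ A.card ∨
       p * (S ∩ A).card + (S ∩ B).card ≤ B.card))
    (w : α → ℝ) (hwA : ∀ a ∈ A, w a = 1) (hwB : ∀ b ∈ B, w b = (p : ℝ) - ε) :
    I A ∧ I B ∧
    (∑ e ∈ B, w e) = ((p : ℝ) - ε) ^ 2 * (∑ e ∈ A, w e) ∧
    ∀ Y ⊆ B, ∀ Z ⊆ A, (Z.card : ℝ) < (ε / p) * n →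
      I ((A \ Z) ∪ Y) → (∑ e ∈ (A \ Z) ∪ Y, w e) ≤ ∑ e ∈ A, w e := by
  have hsumA : ∑ e ∈ A, w e = n := by simp [sum_eq_card_nsmul hwA, hcardA]
  refine ⟨(hI A).2 (Or.inl ?_), (hI B).2 (Or.inr ?_), ?_, ?_⟩
  · simp [disjoint_iff_inter_eq_empty.mp hdisj]
  · simp [disjoint_iff_inter_eq_empty.mp hdisj.symm]
  · rw [hsumA, sum_eq_card_nsmul hwB, hcardB, nsmul_eq_mul, hmval]
    ring
  · intro Y hY Z hZ hZsmall hexch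
    have hZn : Z.card ≤ n := hcardA ▸ card_le_card hZ
    rw [hI, sdiff_union_inter_left hdisj hY, sdiff_union_inter_right hdisj hY,
      card_sdiff_of_subset hZ, hcardA, hcardB] at hexch
    rw [sum_sdiff_union_of_eq_one_of_eq hdisj hY hZ hwA hwB, hsumA, hcardA]
    rcases hexch with hfirst | hsecond
    · exact cast_sub_add_mul_le_of_sub_add_mul_le hε0.le hZn hfirst
    · exact absurd hsecond (not_mul_sub_add_le (by omega) hZn hZsmall hmval)

/-- The lower-bound instance for local search on `p`-extendible systems:
`A` and `B` are independent, `w(B) = (p−ε)²·w(A)`, and any feasible exchange that adds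
`Y ⊆ B` and removes `Z ⊆ A` with `|Z| < (ε/p)·n` does not improve on `A`. -/
theorem local_search_lower_bound_pExtendible
    {α : Type*} [Fintype α] [DecidableEq α] (p : ℕ) (hp : 2 ≤ p)
    (ε : ℝ) (hε0 : 0 < ε) (hεp : ε < (p : ℝ))
    (n m : ℕ) (hn : 0 < n) (hm : 0 < m) (hmval : (m : ℝ) = ((p : ℝ) - ε) * n)
    (A B : Finset α) (hdisj : Disjoint A B)
    (hground : (Finset.univ : Finset α) = A ∪ B)
    (hcardA : A.card = n) (hcardB : B.card = m)
    (I : Finset α → Prop)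
    (hI : ∀ S : Finset α, I S ↔
      ((S ∩ A).card + p * (S ∩ B).card ≤ A.card ∨
       p * (S ∩ A).card + (S ∩ B).card ≤ B.card))
    (w : α → ℝ) (hwA : ∀ a ∈ A, w a = 1) (hwB : ∀ b ∈ B, w b = (p : ℝ) - ε) :
    I A ∧ I B ∧
    (∑ e ∈ B, w e) = ((p : ℝ) - ε) ^ 2 * (∑ e ∈ A, w e) ∧
    ∀ Y ⊆ B, ∀ Z ⊆ A, (Z.card : ℝ) < (ε / p) * n →
      I ((A \ Z) ∪ Y) → (∑ e ∈ (A \ Z) ∪ Y, w e) ≤ ∑ e ∈ A, w e :=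
  local_search_lower_bound_pExtendible_general p hp ε hε0 n m hmval A B hdisj hcardA hcardB I hI w
    hwA hwB
end

section
/- Let (X, I) be a p-extendible independence system (p a positive integer) and f : 2^X → ℝ≥0 a monotone submodular function. Let A ∈ I be a maximal independent set that is a (p,1)-local optimum for f: for every e ∈ X \ A and every Z ⊆ A with |Z| ≤ p and (A \ Z) ∪ {e} ∈ I, one has f((A \ Z) ∪ {e}) ≤ f(A). Then for every B ∈ I, f(B) ≤ (p² + 1)·f(A). -/
open Finset

/-- `A` is a `(p,1)`-local optimum for `f` over `I`: no swap that removes at most `p`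
elements of `A` and adds one new element yields a feasible set of larger `f`-value. -/
def LocalOpt {α : Type*} [DecidableEq α] (p : ℕ) (I : Finset α → Prop)
    (f : Finset α → ℝ) (A : Finset α) : Prop :=
  ∀ e ∉ A, ∀ Z ⊆ A, Z.card ≤ p → I (insert e (A \ Z)) →
    f (insert e (A \ Z)) ≤ f A

/- ### Auxiliary lemmas -/

/-- Subadditivity over singletons for a submodular function. -/
lemma singletons_bound {α : Type*} [DecidableEq α] {f : Finset α → ℝ}
    (hsub : SubmodularFn f) (Z : Finset α) :
    f Z - f ∅ ≤ ∑ z ∈ Z, (f {z} - f ∅) := by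
  induction Z using Finset.induction_on with
  | empty => simp
  | @insert z Z hz ih =>
    have h := hsub Z {z}
    have hu : Z ∪ {z} = insert z Z := by
      rw [Finset.union_comm, ← Finset.insert_eq]
    have hi : Z ∩ {z} = ∅ := by
      rw [Finset.inter_comm]
      exact Finset.singleton_inter_of_notMem hz
    rw [hu, hi] at h
    rw [Finset.sum_insert hz]
    linarith

/-- Marginal-sum bound: `f (A ∪ D) ≤ f A + ∑_{e ∈ D} (f (A∪{e}) − f A)` for `D` disjoint
from `A`. -/
lemma sum_marg {α : Type*} [DecidableEq α] {f : Finset α → ℝ}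
    (hsub : SubmodularFn f) (A : Finset α) :
    ∀ D : Finset α, Disjoint A D →
      f (A ∪ D) ≤ f A + ∑ e ∈ D, (f (insert e A) - f A) := by
  intro D
  induction D using Finset.induction_on with
  | empty => simp
  | @insert d D hd ih =>
    intro hdisj
    have hdA : d ∉ A := Finset.disjoint_right.mp hdisj (Finset.mem_insert_self d D)
    have hDdis : Disjoint A D := hdisj.mono_right (Finset.subset_insert d D)
    have hdAD : d ∉ A ∪ D := by simp [hdA, hd]
    have hs := hsub (A ∪ D) (insert d A)
    have hu : (A ∪ D) ∪ insert d A = insert d (A ∪ D) := by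
      rw [Finset.union_insert]
      congr 1
      exact Finset.union_eq_left.mpr (Finset.subset_union_left)
    have hi : (A ∪ D) ∩ insert d A = A := by
      rw [Finset.inter_comm, Finset.insert_inter_of_notMem hdAD]
      exact Finset.inter_eq_left.mpr (Finset.subset_union_left)
    rw [hu, hi] at hs
    rw [Finset.union_insert, Finset.sum_insert hd]
    have h2 := ih hDdis
    linarith

/-- Key single-element bound from local optimality: for `e ∉ A` with `{e}` independent,
the marginal of `e` on top of `A` is at most `p · M` where `M` bounds all singleton
values of elements of `A`. -/
lemma marg_le {α : Type*} [DecidableEq α] {p : ℕ} {I : Finset α → Prop}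
    (hdc : DownClosed I) (hext : Extendible p I)
    {f : Finset α → ℝ} (hsub : SubmodularFn f)
    {A : Finset α} (hA : I A) (hlocal : LocalOpt p I f A)
    {e : α} (heA : e ∉ A) (heI : I {e}) {M : ℝ} (hM0 : 0 ≤ M)
    (hM : ∀ z ∈ A, f {z} - f ∅ ≤ M) :
    f (insert e A) - f A ≤ (p : ℝ) * M := by
  obtain ⟨Z, hZ, hZc, hZI⟩ := hext ∅ A e (Finset.empty_subset A) hdc.1 hA (by simpa using heI)
  rw [Finset.sdiff_empty] at hZ
  -- step 1 : submodularity
  have h1 : f (insert e A) + f (A \ Z) ≤ f A + f (insert e (A \ Z)) := by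
    have h := hsub A (insert e (A \ Z))
    have hu : A ∪ insert e (A \ Z) = insert e A := by
      rw [Finset.union_insert]
      congr 1
      exact Finset.union_eq_left.mpr Finset.sdiff_subset
    have hi : A ∩ insert e (A \ Z) = A \ Z := by
      rw [Finset.inter_comm, Finset.insert_inter_of_notMem heA]
      exact Finset.inter_eq_left.mpr Finset.sdiff_subset
    rw [hu, hi] at h
    linarith
  -- step 2 : local optimality
  have h2 : f (insert e (A \ Z)) ≤ f A := hlocal e heA Z hZ hZc hZI
  -- step 3 : submodularity again
  have h3 : f A + f ∅ ≤ f (A \ Z) + f Z := by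
    have h := hsub (A \ Z) Z
    rw [Finset.sdiff_union_of_subset hZ, Finset.sdiff_inter_self] at h
    linarith
  -- step 4 : subadditivity over singletons
  have h4 : f Z - f ∅ ≤ ∑ z ∈ Z, (f {z} - f ∅) := singletons_bound hsub Z
  have h5 : ∑ z ∈ Z, (f {z} - f ∅) ≤ (Z.card : ℝ) * M := by
    calc ∑ z ∈ Z, (f {z} - f ∅) ≤ ∑ _z ∈ Z, M :=
          Finset.sum_le_sum (fun z hz => hM z (hZ hz))
      _ = (Z.card : ℝ) * M := by rw [Finset.sum_const, nsmul_eq_mul]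
  have h6 : (Z.card : ℝ) * M ≤ (p : ℝ) * M := by
    apply mul_le_mul_of_nonneg_right _ hM0
    exact_mod_cast hZc
  linarith

/-- Key lemma, by induction on `|A|`:  the total marginal of `B \ A` on top of the
local optimum `A` is at most `p² (f A − f ∅)`. -/
lemma key_lemma {α : Type*} [DecidableEq α] (p : ℕ) :
    ∀ (n : ℕ) (I : Finset α → Prop), DownClosed I → Extendible p I →
      ∀ f : Finset α → ℝ, (∀ S, 0 ≤ f S) → MonotoneFn f → SubmodularFn f →
      ∀ A : Finset α, I A → (∀ e ∉ A, ¬ I (insert e A)) → LocalOpt p I f A →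
      A.card = n → ∀ B : Finset α, I B →
      ∑ e ∈ B \ A, (f (insert e A) - f A) ≤ (p : ℝ) ^ 2 * (f A - f ∅) := by
  intro n
  induction n with
  | zero =>
    intro I hdc hext f hf0 hmono hsub A hA hAmax hlocal hcard B hB
    rw [Finset.card_eq_zero] at hcard
    subst hcard
    rcases B.eq_empty_or_nonempty with rfl | ⟨e, heB⟩
    · simp
    · exact absurd (by simpa using hdc.2 B {e} hB (Finset.singleton_subset_iff.mpr heB))
        (hAmax e (Finset.notMem_empty e))
  | succ n IH =>
    intro I hdc hext f hf0 hmono hsub A hA hAmax hlocal hcard B hB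
    by_cases hE : B \ A = ∅
    · rw [hE, Finset.sum_empty]
      exact mul_nonneg (by positivity)
        (by have := hmono ∅ A (Finset.empty_subset A); linarith)
    · have hAne : A.Nonempty := Finset.card_pos.mp (by rw [hcard]; exact Nat.succ_pos n)
      obtain ⟨a₁, ha₁A, ha₁max⟩ := Finset.exists_max_image A (fun z => f {z}) hAne
      set E := B \ A with hEdef
      set M : ℝ := f {a₁} - f ∅ with hMdef
      have hM0 : 0 ≤ M := by
        have := hmono ∅ {a₁} (Finset.empty_subset _)
        simp only [hMdef]; linarith
      -- one chain step : insert a₁ into E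
      have hIE : I E := hdc.2 B E hB Finset.sdiff_subset
      have hIa₁ : I {a₁} := hdc.2 A {a₁} hA (Finset.singleton_subset_iff.mpr ha₁A)
      obtain ⟨V, hVE, hVc, hVI⟩ :=
        hext ∅ E a₁ (Finset.empty_subset E) hdc.1 hIE (by simpa using hIa₁)
      rw [Finset.sdiff_empty] at hVE
      -- the contracted system
      set J : Finset α → Prop := fun S => a₁ ∉ S ∧ I (insert a₁ S) with hJdef
      set f₂ : Finset α → ℝ := fun S => f (insert a₁ S) with hf₂def
      set A₂ : Finset α := A.erase a₁ with hA₂def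
      set B₂ : Finset α := E \ V with hB₂def
      have hJdc : DownClosed J := by
        constructor
        · exact ⟨Finset.notMem_empty a₁, by simpa using hIa₁⟩
        · intro S T hS hTS
          exact ⟨fun h => hS.1 (hTS h), hdc.2 _ _ hS.2 (Finset.insert_subset_insert a₁ hTS)⟩
      have hJext : Extendible p J := by
        intro A' B' e hsub' hA' hB' hins
        have hea : e ≠ a₁ := fun h => hins.1 (by rw [h]; exact Finset.mem_insert_self a₁ A')
        have hIins : I (insert e (insert a₁ A')) := by
          have h := hins.2
          rwa [Finset.insert_comm] at h
        obtain ⟨Z, hZ, hZc, hZI⟩ := hext (insert a₁ A') (insert a₁ B') e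
          (Finset.insert_subset_insert a₁ hsub') hA'.2 hB'.2 hIins
        have hZsub : Z ⊆ B' \ A' := by
          intro x hx
          have hx' := hZ hx
          rw [Finset.mem_sdiff] at hx' ⊢
          have hxne : x ≠ a₁ := fun h => hx'.2 (by rw [h]; exact Finset.mem_insert_self a₁ A')
          refine ⟨?_, fun h => hx'.2 (Finset.mem_insert_of_mem h)⟩
          rcases Finset.mem_insert.mp hx'.1 with h | h
          · exact absurd h hxne
          · exact h
        have ha₁Z : a₁ ∉ Z := fun h => ((Finset.mem_sdiff.mp (hZsub h)).1 : a₁ ∈ B') |> hB'.1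
        have hswap : insert a₁ B' \ Z = insert a₁ (B' \ Z) := by
          ext x
          simp only [Finset.mem_sdiff, Finset.mem_insert]
          constructor
          · rintro ⟨(rfl | hxB), hxZ⟩
            · exact Or.inl rfl
            · exact Or.inr ⟨hxB, hxZ⟩
          · rintro (rfl | ⟨hxB, hxZ⟩)
            · exact ⟨Or.inl rfl, ha₁Z⟩
            · exact ⟨Or.inr hxB, hxZ⟩
        refine ⟨Z, hZsub, hZc, ?_, ?_⟩
        · intro h
          rcases Finset.mem_insert.mp h with h | h
          · exact hea h.symm
          · exact hB'.1 ((Finset.sdiff_subset) h)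
        · rw [← Finset.insert_comm, ← hswap]
          exact hZI
      have hf₂0 : ∀ S, 0 ≤ f₂ S := fun S => hf0 _
      have hf₂mono : MonotoneFn f₂ := fun S T h => hmono _ _ (Finset.insert_subset_insert a₁ h)
      have hf₂sub : SubmodularFn f₂ := by
        intro S T
        have h := hsub (insert a₁ S) (insert a₁ T)
        show f (insert a₁ (S ∪ T)) + f (insert a₁ (S ∩ T)) ≤ _
        rw [Finset.insert_union_distrib, Finset.insert_inter_distrib]
        exact h
      have hJA₂ : J A₂ := ⟨Finset.notMem_erase a₁ A, by rw [Finset.insert_erase ha₁A]; exact hA⟩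
      have hJmax : ∀ e ∉ A₂, ¬ J (insert e A₂) := by
        intro e he hJe
        have hea : e ≠ a₁ := fun h => hJe.1 (by rw [h]; exact Finset.mem_insert_self a₁ _)
        have heA : e ∉ A := fun h => he (Finset.mem_erase.mpr ⟨hea, h⟩)
        have h := hJe.2
        rw [Finset.insert_comm, Finset.insert_erase ha₁A] at h
        exact hAmax e heA h
      have hJlocal : LocalOpt p J f₂ A₂ := by
        intro e he Z hZA₂ hZc hJind
        obtain ⟨hnot, hind⟩ := hJind
        have hea : e ≠ a₁ := fun h => hnot (by rw [h]; exact Finset.mem_insert_self a₁ _)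
        have ha₁Z : a₁ ∉ Z := fun h => (Finset.notMem_erase a₁ A) (hZA₂ h)
        have hid : insert a₁ (A₂ \ Z) = A \ Z := by
          ext x
          simp only [hA₂def, Finset.mem_insert, Finset.mem_sdiff, Finset.mem_erase]
          constructor
          · rintro (rfl | ⟨⟨hxne, hxA⟩, hxZ⟩)
            · exact ⟨ha₁A, ha₁Z⟩
            · exact ⟨hxA, hxZ⟩
          · rintro ⟨hxA, hxZ⟩
            by_cases hx : x = a₁
            · exact Or.inl hx
            · exact Or.inr ⟨⟨hx, hxA⟩, hxZ⟩
        have hind' : I (insert e (A \ Z)) := by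
          rw [Finset.insert_comm, hid] at hind
          exact hind
        have heA : e ∉ A := fun h => he (Finset.mem_erase.mpr ⟨hea, h⟩)
        have hres := hlocal e heA Z (hZA₂.trans (Finset.erase_subset a₁ A)) hZc hind'
        show f (insert a₁ (insert e (A₂ \ Z))) ≤ f (insert a₁ A₂)
        rw [Finset.insert_comm, hid, Finset.insert_erase ha₁A]
        exact hres
      have hJB₂ : J B₂ := by
        refine ⟨fun h => ?_, hVI⟩
        have hxE : a₁ ∈ E := (Finset.mem_sdiff.mp h).1
        exact (Finset.mem_sdiff.mp hxE).2 ha₁A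
      have hA₂card : A₂.card = n := by
        rw [hA₂def, Finset.card_erase_of_mem ha₁A, hcard]
        omega
      have hIHres := IH J hJdc hJext f₂ hf₂0 hf₂mono hf₂sub A₂ hJA₂ hJmax hJlocal hA₂card B₂ hJB₂
      -- rewrite the IH result in terms of f and A
      have hBA₂ : B₂ \ A₂ = B₂ := by
        apply Finset.sdiff_eq_self_iff_disjoint.mpr
        rw [Finset.disjoint_left]
        intro x hx hx2
        have hxE : x ∈ E := (Finset.mem_sdiff.mp hx).1
        exact (Finset.mem_sdiff.mp hxE).2 (Finset.erase_subset a₁ A hx2)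
      rw [hBA₂] at hIHres
      have hterm : ∀ e ∈ B₂, f₂ (insert e A₂) - f₂ A₂ = f (insert e A) - f A := by
        intro e _
        have h1 : insert a₁ (insert e A₂) = insert e A := by
          rw [Finset.insert_comm, Finset.insert_erase ha₁A]
        show f (insert a₁ (insert e A₂)) - f (insert a₁ A₂) = _
        rw [h1, Finset.insert_erase ha₁A]
      rw [Finset.sum_congr rfl hterm] at hIHres
      have hf₂A₂ : f₂ A₂ = f A := by
        show f (insert a₁ A₂) = f A
        rw [Finset.insert_erase ha₁A]
      have hf₂e : f₂ ∅ = f {a₁} := by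
        show f (insert a₁ ∅) = f {a₁}
        simp
      rw [hf₂A₂, hf₂e] at hIHres
      -- bound the V part
      have hVbound : ∀ e ∈ V, f (insert e A) - f A ≤ (p : ℝ) * M := by
        intro e heV
        have heE : e ∈ E := hVE heV
        have heB : e ∈ B := (Finset.mem_sdiff.mp heE).1
        have heA : e ∉ A := (Finset.mem_sdiff.mp heE).2
        have heI : I {e} := hdc.2 B {e} hB (Finset.singleton_subset_iff.mpr heB)
        exact marg_le hdc hext hsub hA hlocal heA heI hM0
          (fun z hz => by have := ha₁max z hz; simp only [hMdef]; linarith)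
      have hpM0 : 0 ≤ (p : ℝ) * M := mul_nonneg (by positivity) hM0
      have hsumV : ∑ e ∈ V, (f (insert e A) - f A) ≤ (p : ℝ) * ((p : ℝ) * M) := by
        calc ∑ e ∈ V, (f (insert e A) - f A) ≤ ∑ _e ∈ V, (p : ℝ) * M :=
              Finset.sum_le_sum hVbound
          _ = (V.card : ℝ) * ((p : ℝ) * M) := by rw [Finset.sum_const, nsmul_eq_mul]
          _ ≤ (p : ℝ) * ((p : ℝ) * M) := by
              apply mul_le_mul_of_nonneg_right _ hpM0
              exact_mod_cast hVc
      have hsplit : ∑ e ∈ E \ V, (f (insert e A) - f A) + ∑ e ∈ V, (f (insert e A) - f A)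
          = ∑ e ∈ E, (f (insert e A) - f A) := Finset.sum_sdiff hVE
      have hring1 : (p : ℝ) * ((p : ℝ) * M) = (p : ℝ) ^ 2 * (f {a₁} - f ∅) := by
        rw [hMdef]; ring
      have hring2 : (p : ℝ) ^ 2 * (f A - f {a₁}) + (p : ℝ) ^ 2 * (f {a₁} - f ∅)
          = (p : ℝ) ^ 2 * (f A - f ∅) := by ring
      show ∑ e ∈ E, (f (insert e A) - f A) ≤ (p : ℝ) ^ 2 * (f A - f ∅)
      linarith

/-- `(p,1)`-local search is a `1/(p²+1)`-approximation for monotone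
submodular maximization over a `p`-extendible system: every maximal `(p,1)`-local
optimum `A` satisfies `f(B) ≤ (p²+1)·f(A)` for all independent `B`. -/
theorem local_search_approx_submodular_pExtendible
    {α : Type*} [Fintype α] [DecidableEq α] (p : ℕ) (hp : 0 < p)
    (I : Finset α → Prop) (hdc : DownClosed I) (hext : Extendible p I)
    (f : Finset α → ℝ) (hf0 : ∀ S : Finset α, 0 ≤ f S)
    (hmono : MonotoneFn f) (hsub : SubmodularFn f)
    (A : Finset α) (hA : I A) (hAmax : ∀ e : α, e ∉ A → ¬ I (insert e A))
    (hlocal : LocalOpt p I f A) :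
    ∀ B : Finset α, I B → f B ≤ ((p : ℝ) ^ 2 + 1) * f A := by
  intro B hB
  have hkey := key_lemma p A.card I hdc hext f hf0 hmono hsub A hA hAmax hlocal rfl B hB
  have h1 : f B ≤ f (A ∪ B) := hmono B (A ∪ B) Finset.subset_union_right
  have h2 : f (A ∪ B) ≤ f A + ∑ e ∈ B \ A, (f (insert e A) - f A) := by
    have h := sum_marg hsub A (B \ A) (Finset.disjoint_sdiff)
    rwa [Finset.union_sdiff_self_eq_union] at h
  have h0 : 0 ≤ f ∅ := hf0 ∅
  have hp2 : (0 : ℝ) ≤ (p : ℝ) ^ 2 := by positivity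
  have h3 : (p : ℝ) ^ 2 * (f A - f ∅) ≤ (p : ℝ) ^ 2 * f A :=
    mul_le_mul_of_nonneg_left (by linarith) hp2
  have hring : ((p : ℝ) ^ 2 + 1) * f A = (p : ℝ) ^ 2 * f A + f A := by ring
  linarith
end

section
/- Let (X, I) be a p-extendible independence system (p a positive integer) with nonnegative additive weights w. Let A ∈ I be a maximal independent set that is a (p,1)-local optimum for w: for every e ∈ X \ A and every Z ⊆ A with |Z| ≤ p and (A \ Z) ∪ {e} ∈ I, one has w((A \ Z) ∪ {e}) ≤ w(A). Then for every B ∈ I, w(B) ≤ p²·w(A). -/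
open Finset

lemma exists_top {α : Type*} [DecidableEq α] (w : α → ℝ) :
    ∀ (k : ℕ) (s : Finset α), ∃ E' ⊆ s, E'.card = min k s.card ∧
      ∀ y ∈ s \ E', ∀ x ∈ E', w y ≤ w x := by
  intro k
  induction k with
  | zero => intro s; exact ⟨∅, empty_subset _, by simp, by simp⟩
  | succ k ih =>
    intro s
    rcases s.eq_empty_or_nonempty with rfl | hne
    · exact ⟨∅, empty_subset _, by simp, by simp⟩
    · obtain ⟨x₀, hx₀, hmax⟩ := s.exists_max_image w hne
      obtain ⟨E'', hsub, hcard, htop⟩ := ih (s.erase x₀)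
      have hx₀E : x₀ ∉ E'' := fun h => (Finset.mem_erase.mp (hsub h)).1 rfl
      refine ⟨insert x₀ E'', ?_, ?_, ?_⟩
      · exact insert_subset hx₀ (hsub.trans (erase_subset _ _))
      · rw [card_insert_of_notMem hx₀E, hcard, card_erase_of_mem hx₀]
        have : 1 ≤ s.card := card_pos.mpr hne
        omega
      · intro y hy x hx
        rcases mem_insert.mp hx with rfl | hx
        · exact hmax y (mem_sdiff.mp hy).1
        · have hy' : y ∈ s.erase x₀ \ E'' := by
            rw [mem_sdiff] at hy ⊢
            exact ⟨mem_erase.mpr ⟨fun h => hy.2 (h ▸ mem_insert_self _ _), hy.1⟩,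
              fun h => hy.2 (mem_insert_of_mem h)⟩
          exact htop y hy' x hx

lemma sum_le_of_threshold {α : Type*} [DecidableEq α] (p : ℕ) (hp : 0 < p)
    (w : α → ℝ) (hw : ∀ e : α, 0 ≤ w e) :
    ∀ (n : ℕ) (A₀ E₀ : Finset α), A₀.card = n →
      (∀ t : ℝ, 0 < t →
        (E₀.filter (fun e => t ≤ w e)).card ≤ p * (A₀.filter (fun a => t ≤ (p : ℝ) * w a)).card) →
      ∑ e ∈ E₀, w e ≤ (p : ℝ) ^ 2 * ∑ a ∈ A₀, w a := by
  intro n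
  induction n using Nat.strong_induction_on with
  | _ n ih =>
    intro A₀ E₀ hcard hthresh
    by_cases hE : ∀ e ∈ E₀, w e ≤ 0
    · have h1 : ∑ e ∈ E₀, w e ≤ 0 := Finset.sum_nonpos hE
      have h2 : (0:ℝ) ≤ ∑ a ∈ A₀, w a := Finset.sum_nonneg fun a _ => hw a
      nlinarith
    · push_neg at hE
      obtain ⟨e₀, he₀, he₀pos⟩ := hE
      obtain ⟨em, hem, hmax⟩ := E₀.exists_max_image w ⟨e₀, he₀⟩
      set t := w em with htdef
      have ht : 0 < t := lt_of_lt_of_le he₀pos (hmax e₀ he₀)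
      -- find a heavy a*
      have hfilE : em ∈ E₀.filter (fun e => t ≤ w e) := mem_filter.mpr ⟨hem, le_refl _⟩
      have h1 : 1 ≤ (E₀.filter (fun e => t ≤ w e)).card := card_pos.mpr ⟨em, hfilE⟩
      have h2 := hthresh t ht
      have hAne : (A₀.filter (fun a => t ≤ (p : ℝ) * w a)).Nonempty := by
        rw [← card_pos]
        rcases Nat.eq_zero_or_pos (A₀.filter (fun a => t ≤ (p : ℝ) * w a)).card with h0 | h
        · rw [h0, Nat.mul_zero] at h2; omega
        · exact h
      obtain ⟨astar, hastar⟩ := hAne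
      have hastarA : astar ∈ A₀ := (mem_filter.mp hastar).1
      have hastarw : t ≤ (p : ℝ) * w astar := (mem_filter.mp hastar).2
      -- top-p elements
      obtain ⟨E', hE'sub, hE'card, hE'top⟩ := exists_top w p E₀
      set E₁ := E₀ \ E' with hE₁def
      set A₁ := A₀.erase astar with hA₁def
      have hA₁card : A₁.card = A₀.card - 1 := card_erase_of_mem hastarA
      have hn1 : 1 ≤ n := by rw [← hcard]; exact card_pos.mpr ⟨astar, hastarA⟩
      -- new threshold
      have hthresh1 : ∀ s : ℝ, 0 < s →
          (E₁.filter (fun e => s ≤ w e)).card ≤ p * (A₁.filter (fun a => s ≤ (p : ℝ) * w a)).card := by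
        intro s hs
        have hfe : E₁.filter (fun e => s ≤ w e) = E₀.filter (fun e => s ≤ w e) \ E' := by
          ext x; simp [hE₁def, mem_filter, mem_sdiff]; tauto
        by_cases hcase : E₀.filter (fun e => s ≤ w e) ⊆ E'
        · have : E₁.filter (fun e => s ≤ w e) = ∅ := by
            rw [hfe, sdiff_eq_empty_iff_subset]; exact hcase
          simp [this]
        · obtain ⟨y, hy, hyE'⟩ := not_subset.mp hcase
          have hyE₀ : y ∈ E₀ := (mem_filter.mp hy).1
          have hyw : s ≤ w y := (mem_filter.mp hy).2
          have hE'filt : E' ⊆ E₀.filter (fun e => s ≤ w e) := by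
            intro x hx
            exact mem_filter.mpr ⟨hE'sub hx, le_trans hyw (hE'top y (mem_sdiff.mpr ⟨hyE₀, hyE'⟩) x hx)⟩
          have hE'p : E'.card = p := by
            by_contra hne
            have hle : E₀.card < p := by
              rcases Nat.lt_or_ge E₀.card p with h | h
              · exact h
              · exfalso; apply hne; rw [hE'card]; omega
            have : E' = E₀ := eq_of_subset_of_card_le hE'sub (by rw [hE'card]; omega)
            exact hyE' (this ▸ hyE₀)
          have hst : s ≤ t := le_trans hyw (hmax y hyE₀)
          have hastarfilt : astar ∈ A₀.filter (fun a => s ≤ (p : ℝ) * w a) :=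
            mem_filter.mpr ⟨hastarA, le_trans hst hastarw⟩
          have hfa : A₁.filter (fun a => s ≤ (p : ℝ) * w a)
              = (A₀.filter (fun a => s ≤ (p : ℝ) * w a)).erase astar := by
            ext x; simp [hA₁def, mem_filter, mem_erase]; tauto
          have hcardE : (E₁.filter (fun e => s ≤ w e)).card
              = (E₀.filter (fun e => s ≤ w e)).card - E'.card := by
            rw [hfe, card_sdiff_of_subset hE'filt]
          have hcardA : (A₁.filter (fun a => s ≤ (p : ℝ) * w a)).card
              = (A₀.filter (fun a => s ≤ (p : ℝ) * w a)).card - 1 := by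
            rw [hfa, card_erase_of_mem hastarfilt]
          have hcA1 : 1 ≤ (A₀.filter (fun a => s ≤ (p : ℝ) * w a)).card :=
            card_pos.mpr ⟨astar, hastarfilt⟩
          have h3 := hthresh s hs
          rw [hcardE, hcardA, hE'p]
          have hmul : p * ((A₀.filter (fun a => s ≤ (p : ℝ) * w a)).card - 1)
              = p * (A₀.filter (fun a => s ≤ (p : ℝ) * w a)).card - p :=
            Nat.mul_sub_one .. ▸ by omega
          omega
      -- apply IH
      have hIH := ih (n - 1) (by omega) A₁ E₁ (by omega) hthresh1
      -- bound the weight of E'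
      have hE'le : ∀ x ∈ E', w x ≤ t := fun x hx => hmax x (hE'sub hx)
      have hE'sum : ∑ x ∈ E', w x ≤ (p : ℝ) * t := by
        calc ∑ x ∈ E', w x ≤ E'.card • t := Finset.sum_le_card_nsmul _ _ _ hE'le
        _ = (E'.card : ℝ) * t := by rw [nsmul_eq_mul]
        _ ≤ (p : ℝ) * t := by
            apply mul_le_mul_of_nonneg_right _ (le_of_lt ht)
            exact_mod_cast Nat.cast_le.mpr (hE'card ▸ Nat.min_le_left _ _)
      have hta : (p : ℝ) * t ≤ (p : ℝ) ^ 2 * w astar := by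
        have hppos : (0:ℝ) < p := by exact_mod_cast hp
        nlinarith
      have hsplit : ∑ e ∈ E₁, w e + ∑ e ∈ E', w e = ∑ e ∈ E₀, w e :=
        Finset.sum_sdiff hE'sub
      have hsplitA : ∑ a ∈ A₁, w a + w astar = ∑ a ∈ A₀, w a :=
        Finset.sum_erase_add _ _ hastarA
      nlinarith

lemma exchange_count {α : Type*} [DecidableEq α] (p : ℕ) (hp : 0 < p)
    (I : Finset α → Prop) (hdc : DownClosed I) (hext : Extendible p I)
    (w : α → ℝ) (A : Finset α) (hA : I A)
    (hlocal : LocalOpt p I (fun S => ∑ e ∈ S, w e) A)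
    (B : Finset α) (hB : I B) (t : ℝ) (ht : 0 < t) :
    ((B \ A).filter (fun e => t ≤ w e)).card
      ≤ p * ((A \ B).filter (fun a => t ≤ (p : ℝ) * w a)).card := by
  classical
  set E := (B \ A).filter (fun e => t ≤ w e) with hEdef
  set F := (A \ B).filter (fun a => t ≤ (p : ℝ) * w a) with hFdef
  have hEB : E ⊆ B \ A := filter_subset _ _
  have hFA : F ⊆ A \ B := filter_subset _ _
  -- iterative exchange: insert elements of F into (A ∩ B) ∪ E
  have key : ∀ F' : Finset α, F' ⊆ F → ∃ T, I T ∧ (A ∩ B) ∪ F' ⊆ T ∧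
      T ⊆ (A ∩ B) ∪ F' ∪ E ∧ E.card ≤ (E ∩ T).card + p * F'.card := by
    intro F'
    induction F' using Finset.induction_on with
    | empty =>
      intro _
      refine ⟨(A ∩ B) ∪ E, ?_, by simp, by simp [union_assoc], ?_⟩
      · apply hdc.2 B _ hB
        apply union_subset (inter_subset_right)
        exact hEB.trans (sdiff_subset)
      · have : E ⊆ (A ∩ B) ∪ E := subset_union_right
        rw [(inter_eq_left).mpr this]
        simp
    | @insert a F' haF' ihF =>
      intro hsub
      have haF : a ∈ F := hsub (mem_insert_self _ _)
      have hF'F : F' ⊆ F := (subset_insert _ _).trans hsub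
      obtain ⟨T, hIT, hsubT, hTsub, hcardT⟩ := ihF hF'F
      have haA : a ∈ A := (mem_sdiff.mp (hFA haF)).1
      have hsmallA : (A ∩ B) ∪ F' ⊆ A :=
        union_subset inter_subset_left (hF'F.trans (hFA.trans sdiff_subset))
      have hIsmall : I ((A ∩ B) ∪ F') := hdc.2 A _ hA hsmallA
      have hIins : I (insert a ((A ∩ B) ∪ F')) :=
        hdc.2 A _ hA (insert_subset haA hsmallA)
      obtain ⟨Z, hZsub, hZcard, hIT'⟩ := hext ((A ∩ B) ∪ F') T a hsubT hIsmall hIT hIins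
      refine ⟨insert a (T \ Z), hIT', ?_, ?_, ?_⟩
      · intro x hx
        rcases mem_union.mp hx with hx | hx
        · have hxT : x ∈ T := hsubT (mem_union_left _ hx)
          have hxZ : x ∉ Z := fun h => (mem_sdiff.mp (hZsub h)).2 (mem_union_left _ hx)
          exact mem_insert_of_mem (mem_sdiff.mpr ⟨hxT, hxZ⟩)
        · rcases mem_insert.mp hx with rfl | hx
          · exact mem_insert_self _ _
          · have hxT : x ∈ T := hsubT (mem_union_right _ hx)
            have hxZ : x ∉ Z := fun h => (mem_sdiff.mp (hZsub h)).2 (mem_union_right _ hx)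
            exact mem_insert_of_mem (mem_sdiff.mpr ⟨hxT, hxZ⟩)
      · intro x hx
        rcases mem_insert.mp hx with rfl | hx
        · exact mem_union_left _ (mem_union_right _ (mem_insert_self _ _))
        · have := hTsub (mem_sdiff.mp hx).1
          rcases mem_union.mp this with h | h
          · rcases mem_union.mp h with h | h
            · exact mem_union_left _ (mem_union_left _ h)
            · exact mem_union_left _ (mem_union_right _ (mem_insert_of_mem h))
          · exact mem_union_right _ h
      · have hsub1 : (E ∩ T) \ Z ⊆ E ∩ insert a (T \ Z) := by
          intro x hx
          obtain ⟨hxET, hxZ⟩ := mem_sdiff.mp hx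
          obtain ⟨hxE, hxT⟩ := mem_inter.mp hxET
          exact mem_inter.mpr ⟨hxE, mem_insert_of_mem (mem_sdiff.mpr ⟨hxT, hxZ⟩)⟩
        have h1 : (E ∩ T).card ≤ ((E ∩ T) \ Z).card + Z.card := by
          have : E ∩ T ⊆ ((E ∩ T) \ Z) ∪ Z := by
            intro x hx
            by_cases hxZ : x ∈ Z
            · exact mem_union_right _ hxZ
            · exact mem_union_left _ (mem_sdiff.mpr ⟨hx, hxZ⟩)
          calc (E ∩ T).card ≤ (((E ∩ T) \ Z) ∪ Z).card := card_le_card this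
          _ ≤ ((E ∩ T) \ Z).card + Z.card := card_union_le _ _
        have h2 : ((E ∩ T) \ Z).card ≤ (E ∩ insert a (T \ Z)).card := card_le_card hsub1
        rw [card_insert_of_notMem haF']
        have hm : p * (F'.card + 1) = p * F'.card + p := by ring
        have := hcardT
        omega
  obtain ⟨T, hIT, hsubT, hTsub, hcardT⟩ := key F Subset.rfl
  -- leftover heavy elements of E would contradict local optimality
  have hET : E ∩ T = ∅ := by
    by_contra hne
    obtain ⟨e, he⟩ := nonempty_iff_ne_empty.mpr hne
    obtain ⟨heE, heT⟩ := mem_inter.mp he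
    have heBA : e ∈ B \ A := hEB heE
    have hew : t ≤ w e := (mem_filter.mp heE).2
    have heA : e ∉ A := (mem_sdiff.mp heBA).2
    have hsmallA : (A ∩ B) ∪ F ⊆ A :=
      union_subset inter_subset_left (hFA.trans sdiff_subset)
    have hIsmall : I ((A ∩ B) ∪ F) := hdc.2 A _ hA hsmallA
    have hIins : I (insert e ((A ∩ B) ∪ F)) := by
      apply hdc.2 T _ hIT
      exact insert_subset heT hsubT
    obtain ⟨Z, hZsub, hZcard, hIfin⟩ := hext ((A ∩ B) ∪ F) A e hsmallA hIsmall hA hIins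
    have hZA : Z ⊆ A := hZsub.trans sdiff_subset
    have hloc := hlocal e heA Z hZA hZcard hIfin
    simp only at hloc
    have heAZ : e ∉ A \ Z := fun h => heA (mem_sdiff.mp h).1
    rw [Finset.sum_insert heAZ, Finset.sum_sdiff_eq_sub hZA] at hloc
    -- so w e ≤ ∑ Z w
    have hwe : w e ≤ ∑ z ∈ Z, w z := by linarith
    -- each z ∈ Z is light
    have hlight : ∀ z ∈ Z, w z < t / p := by
      intro z hz
      have hzd := mem_sdiff.mp (hZsub hz)
      obtain ⟨hzA, hznot⟩ := hzd
      have hzB : z ∉ B := fun hzB => hznot (mem_union_left _ (mem_inter.mpr ⟨hzA, hzB⟩))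
      have hzF : z ∉ F := fun h => hznot (mem_union_right _ h)
      have : ¬ (t ≤ (p : ℝ) * w z) := fun h =>
        hzF (mem_filter.mpr ⟨mem_sdiff.mpr ⟨hzA, hzB⟩, h⟩)
      push_neg at this
      have hppos : (0:ℝ) < p := by exact_mod_cast hp
      rw [lt_div_iff₀ hppos]
      linarith [this]
    have hZsum : ∑ z ∈ Z, w z < t := by
      rcases Z.eq_empty_or_nonempty with rfl | hZne
      · simpa using ht
      · have hppos : (0:ℝ) < p := by exact_mod_cast hp
        calc ∑ z ∈ Z, w z < ∑ _z ∈ Z, t / p :=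
          Finset.sum_lt_sum_of_nonempty hZne hlight
        _ = Z.card * (t / p) := by rw [Finset.sum_const, nsmul_eq_mul]
        _ ≤ p * (t / p) := by
            apply mul_le_mul_of_nonneg_right _ (by positivity)
            exact_mod_cast hZcard
        _ = t := by field_simp
    linarith
  rw [hET] at hcardT
  simpa using hcardT

/-- `(p,1)`-local search is a `1/p²`-approximation for additive
maximization over a `p`-extendible system: every maximal `(p,1)`-local optimum `A`
satisfies `w(B) ≤ p²·w(A)` for all independent `B`. -/
theorem local_search_approx_additive_pExtendible
    {α : Type*} [Fintype α] [DecidableEq α] (p : ℕ) (hp : 0 < p)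
    (I : Finset α → Prop) (hdc : DownClosed I) (hext : Extendible p I)
    (w : α → ℝ) (hw : ∀ e : α, 0 ≤ w e)
    (A : Finset α) (hA : I A) (hAmax : ∀ e : α, e ∉ A → ¬ I (insert e A))
    (hlocal : LocalOpt p I (fun S => ∑ e ∈ S, w e) A) :
    ∀ B : Finset α, I B → (∑ e ∈ B, w e) ≤ (p : ℝ) ^ 2 * ∑ e ∈ A, w e := by
  intro B hB
  have hthresh : ∀ t : ℝ, 0 < t →
      ((B \ A).filter (fun e => t ≤ w e)).card
        ≤ p * ((A \ B).filter (fun a => t ≤ (p : ℝ) * w a)).card :=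
    fun t ht => exchange_count p hp I hdc hext w A hA hlocal B hB t ht
  have hmain : ∑ e ∈ B \ A, w e ≤ (p : ℝ) ^ 2 * ∑ a ∈ A \ B, w a :=
    sum_le_of_threshold p hp w hw (A \ B).card (A \ B) (B \ A) rfl hthresh
  have hBsplit : ∑ e ∈ B ∩ A, w e + ∑ e ∈ B \ A, w e = ∑ e ∈ B, w e :=
    Finset.sum_inter_add_sum_sdiff _ _ _
  have hAsplit : ∑ e ∈ A ∩ B, w e + ∑ e ∈ A \ B, w e = ∑ e ∈ A, w e :=
    Finset.sum_inter_add_sum_sdiff _ _ _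
  have hcomm : ∑ e ∈ B ∩ A, w e = ∑ e ∈ A ∩ B, w e := by rw [Finset.inter_comm]
  have h1 : (0:ℝ) ≤ ∑ e ∈ A ∩ B, w e := Finset.sum_nonneg fun e _ => hw e
  have hp2 : (1:ℝ) ≤ (p : ℝ) ^ 2 := by
    have : (1:ℝ) ≤ (p : ℝ) := by exact_mod_cast hp
    nlinarith
  nlinarith
end

section
/- Let (X, I) be a p-extendible independence system (p a positive integer) with nonnegative additive weights w, and suppose the instance is p²-stable with unique optimal solution B = argmax_{S ∈ I} w(S). Then every maximal independent set A ∈ I that is a (p,1)-local optimum for w (for every e ∈ X \ A and Z ⊆ A with |Z| ≤ p and (A \ Z) ∪ {e} ∈ I, w((A \ Z) ∪ {e}) ≤ w(A)) satisfies A = B. -/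
open Finset

lemma aux_bound {α : Type*} [DecidableEq α] (p : ℕ)
    (I : Finset α → Prop) (hdc : DownClosed I) (hext : Extendible p I)
    (w : α → ℝ) (hw : ∀ e : α, 0 ≤ w e)
    (A : Finset α) (hA : I A) (hAmax : ∀ e : α, e ∉ A → ¬ I (insert e A))
    (hlocal : LocalOpt p I (fun S => ∑ e ∈ S, w e) A)
    (T : Finset α) :
    T ⊆ A → ∀ C : Finset α, I C → C ∩ A = A \ T →
      ∑ e ∈ C \ A, w e ≤ (p : ℝ)^2 * ∑ a ∈ T, w a := by
  induction T using Finset.strongInduction with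
  | _ T ih =>
    intro hTA C hC hCA
    rcases T.eq_empty_or_nonempty with rfl | hTne
    · -- base case: A ⊆ C, maximality forces C \ A = ∅
      have hAC : A ⊆ C := by
        intro x hx
        have : x ∈ C ∩ A := by rw [hCA]; simpa using hx
        exact (Finset.mem_inter.mp this).1
      have hempty : C \ A = ∅ := by
        by_contra h
        obtain ⟨x, hx⟩ := Finset.nonempty_iff_ne_empty.mpr h
        rw [Finset.mem_sdiff] at hx
        exact hAmax x hx.2 (hdc.2 C _ hC (Finset.insert_subset hx.1 hAC))
      simp [hempty]
    · obtain ⟨a, haT, hamax⟩ := Finset.exists_max_image T w hTne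
      have haA : a ∈ A := hTA haT
      -- insert a into C, removing W ⊆ C \ A
      have hCAsub : C ∩ A ⊆ C := Finset.inter_subset_left
      have hICA : I (C ∩ A) := hdc.2 C _ hC hCAsub
      have hIins : I (insert a (C ∩ A)) := by
        refine hdc.2 A _ hA ?_
        exact Finset.insert_subset haA Finset.inter_subset_right
      obtain ⟨W, hWsub, hWcard, hC'⟩ := hext (C ∩ A) C a hCAsub hICA hC hIins
      rw [Finset.sdiff_inter_self_left] at hWsub
      set C' : Finset α := insert a (C \ W) with hC'def
      -- per-element bound on W
      have hWbound : ∀ e ∈ W, w e ≤ (p : ℝ) * w a := by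
        intro e heW
        have heCA : e ∈ C \ A := hWsub heW
        rw [Finset.mem_sdiff] at heCA
        have hins2 : I (insert e (A \ T)) := by
          refine hdc.2 C _ hC ?_
          refine Finset.insert_subset heCA.1 ?_
          rw [← hCA]; exact Finset.inter_subset_left
        obtain ⟨Z, hZsub, hZcard, hZI⟩ :=
          hext (A \ T) A e Finset.sdiff_subset (hdc.2 A _ hA Finset.sdiff_subset) hA hins2
        rw [Finset.sdiff_sdiff_self_left, Finset.inter_eq_right.mpr hTA] at hZsub
        have hZA : Z ⊆ A := hZsub.trans hTA
        have hloc := hlocal e heCA.2 Z hZA hZcard hZI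
        simp only at hloc
        have heAZ : e ∉ A \ Z := fun h => heCA.2 (Finset.mem_sdiff.mp h).1
        rw [Finset.sum_insert heAZ, Finset.sum_sdiff_eq_sub hZA] at hloc
        have hZle : ∑ z ∈ Z, w z ≤ (Z.card : ℝ) * w a := by
          have := Finset.sum_le_card_nsmul Z w (w a) (fun z hz => hamax z (hZsub hz))
          simpa [nsmul_eq_mul] using this
        have hcard : (Z.card : ℝ) ≤ (p : ℝ) := by exact_mod_cast hZcard
        nlinarith [hw a, hw e]
      -- sum bound on W
      have hWsum : ∑ e ∈ W, w e ≤ (p : ℝ)^2 * w a := by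
        have h1 : ∑ e ∈ W, w e ≤ W.card • ((p : ℝ) * w a) :=
          Finset.sum_le_card_nsmul W w _ hWbound
        have hcard : (W.card : ℝ) ≤ (p : ℝ) := by exact_mod_cast hWcard
        have hpa : (0:ℝ) ≤ (p : ℝ) * w a := mul_nonneg (Nat.cast_nonneg p) (hw a)
        rw [nsmul_eq_mul] at h1
        nlinarith
      -- new invariant
      have hC'A : C' ∩ A = A \ T.erase a := by
        have hmem : ∀ x, (x ∈ C ∧ x ∈ A) ↔ (x ∈ A ∧ x ∉ T) := by
          intro x
          rw [← Finset.mem_inter, hCA, Finset.mem_sdiff]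
        ext x
        have hW : x ∈ W → x ∈ C ∧ x ∉ A := by
          intro h; have := hWsub h; rw [Finset.mem_sdiff] at this; exact this
        have hx := hmem x
        simp only [hC'def, Finset.mem_inter, Finset.mem_insert, Finset.mem_sdiff,
          Finset.mem_erase]
        constructor
        · rintro ⟨(rfl | ⟨hxC, hxW⟩), hxA⟩
          · exact ⟨hxA, fun h => h.1 rfl⟩
          · exact ⟨hxA, fun h => (hx.mp ⟨hxC, hxA⟩).2 h.2⟩
        · rintro ⟨hxA, hxnot⟩
          by_cases hxa : x = a
          · exact ⟨Or.inl hxa, hxA⟩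
          · have hxT : x ∉ T := fun h => hxnot ⟨hxa, h⟩
            have hxC : x ∈ C := (hx.mpr ⟨hxA, hxT⟩).1
            exact ⟨Or.inr ⟨hxC, fun h => (hW h).2 hxA⟩, hxA⟩
      have hIH := ih (T.erase a) (Finset.erase_ssubset haT)
        ((Finset.erase_subset a T).trans hTA) C' hC' hC'A
      -- assemble
      have hsubset : C \ A ⊆ W ∪ (C' \ A) := by
        intro x hx
        rw [Finset.mem_sdiff] at hx
        rw [Finset.mem_union]
        by_cases hxW : x ∈ W
        · exact Or.inl hxW
        · refine Or.inr (Finset.mem_sdiff.mpr ⟨?_, hx.2⟩)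
          exact Finset.mem_insert_of_mem (Finset.mem_sdiff.mpr ⟨hx.1, hxW⟩)
      have h2 : ∑ e ∈ C \ A, w e ≤ ∑ e ∈ W ∪ (C' \ A), w e :=
        Finset.sum_le_sum_of_subset_of_nonneg hsubset (fun x _ _ => hw x)
      have h3 : ∑ e ∈ W ∪ (C' \ A), w e ≤ ∑ e ∈ W, w e + ∑ e ∈ C' \ A, w e := by
        have h4 := Finset.sum_union_inter (s₁ := W) (s₂ := C' \ A) (f := w)
        have h5 : 0 ≤ ∑ e ∈ W ∩ (C' \ A), w e := Finset.sum_nonneg (fun x _ => hw x)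
        linarith
      have hsum : ∑ x ∈ T, w x = w a + ∑ x ∈ T.erase a, w x :=
        (Finset.add_sum_erase T w haT).symm
      rw [hsum]
      have hq : (0:ℝ) ≤ (p:ℝ)^2 := by positivity
      nlinarith [Finset.sum_nonneg (fun x (_ : x ∈ T.erase a) => hw x)]

/-- On a `p²`-stable instance of additive maximization over a
`p`-extendible system, every maximal `(p,1)`-local optimum equals the optimal solution. -/
theorem local_search_recovers_additive_pExtendible
    {α : Type*} [Fintype α] [DecidableEq α] (p : ℕ) (hp : 0 < p)
    (I : Finset α → Prop) (hdc : DownClosed I) (hext : Extendible p I)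
    (w : α → ℝ) (hw : ∀ e : α, 0 ≤ w e)
    (B : Finset α) (hstable : AddStable I w ((p : ℝ) ^ 2) B)
    (A : Finset α) (hA : I A) (hAmax : ∀ e : α, e ∉ A → ¬ I (insert e A))
    (hlocal : LocalOpt p I (fun S => ∑ e ∈ S, w e) A) :
    A = B := by
  by_contra hne
  -- combinatorial bound from local optimality
  have hBA : B ∩ A = A \ (A \ B) := by
    rw [Finset.sdiff_sdiff_self_left, Finset.inter_comm]
  have key := aux_bound p I hdc hext w hw A hA hAmax hlocal (A \ B)
    Finset.sdiff_subset B hstable.1 hBA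
  -- stability bound
  have hq1 : (1:ℝ) ≤ (p:ℝ)^2 := by
    have h1 : (1:ℝ) ≤ (p:ℝ) := by exact_mod_cast hp
    nlinarith
  set w' : α → ℝ := fun e => if e ∈ A \ B then (p:ℝ)^2 * w e else w e with hw'def
  have hb : ∀ e, w e ≤ w' e ∧ w' e ≤ (p:ℝ)^2 * w e := by
    intro e
    simp only [hw'def]
    split
    · exact ⟨le_mul_of_one_le_left (hw e) hq1, le_refl _⟩
    · exact ⟨le_refl _, le_mul_of_one_le_left (hw e) hq1⟩
  have hlt := hstable.2 w' hb A hA hne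
  -- compute the two sums
  have hsA : ∑ e ∈ A, w' e = ∑ e ∈ A ∩ B, w e + (p:ℝ)^2 * ∑ e ∈ A \ B, w e := by
    rw [← Finset.sum_inter_add_sum_sdiff A B w']
    congr 1
    · refine Finset.sum_congr rfl (fun x hx => ?_)
      rw [Finset.mem_inter] at hx
      have hnot : x ∉ A \ B := fun h => (Finset.mem_sdiff.mp h).2 hx.2
      simp only [hw'def]
      rw [if_neg hnot]
    · rw [Finset.mul_sum]
      refine Finset.sum_congr rfl (fun x hx => ?_)
      simp only [hw'def]
      rw [if_pos hx]
  have hsB : ∑ e ∈ B, w' e = ∑ e ∈ B ∩ A, w e + ∑ e ∈ B \ A, w e := by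
    rw [← Finset.sum_inter_add_sum_sdiff B A w']
    congr 1
    · refine Finset.sum_congr rfl (fun x hx => ?_)
      rw [Finset.mem_inter] at hx
      have : x ∉ A \ B := fun h => (Finset.mem_sdiff.mp h).2 hx.1
      simp only [hw'def]
      rw [if_neg this]
    · refine Finset.sum_congr rfl (fun x hx => ?_)
      have : x ∉ A \ B := fun h => (Finset.mem_sdiff.mp hx).2 (Finset.mem_sdiff.mp h).1
      simp only [hw'def]
      rw [if_neg this]
  rw [hsA, hsB, Finset.inter_comm B A] at hlt
  linarith
end

section
/- Let I = ∩_{i=1}^p Iᵢ, where each (X, Iᵢ) is a matroid on the finite ground set X, and let f : 2^X → ℝ≥0 be monotone submodular. Suppose the instance (X, I, f) is (p+1)-stable with unique optimal solution S*. Then every maximal independent set A ∈ I that is a (p,1)-local optimum for f (for every e ∈ X \ A and Z ⊆ A with |Z| ≤ p and (A \ Z) ∪ {e} ∈ I, f((A \ Z) ∪ {e}) ≤ f(A)) satisfies A = S*. -/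
open Finset

section AuxLS
variable {α : Type*} [DecidableEq α]

lemma submod_marginal {f : Finset α → ℝ} (hsub : SubmodularFn f)
    {X Y : Finset α} (hXY : X ⊆ Y) {a : α} (ha : a ∉ Y) :
    f (insert a Y) - f Y ≤ f (insert a X) - f X := by
  have h := hsub (insert a X) Y
  have h1 : insert a X ∪ Y = insert a Y := by
    rw [insert_union, union_eq_right.mpr hXY]
  have h2 : insert a X ∩ Y = X := by
    rw [insert_inter_of_notMem ha, inter_eq_left.mpr hXY]
  rw [h1, h2] at h; linarith

lemma matroid_grow {M : Finset α → Prop} (hM : IsMatroidFam M) {J K : Finset α}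
    (hJ : M J) (hK : M K) (hle : J.card ≤ K.card) :
    ∃ J', J ⊆ J' ∧ J' ⊆ J ∪ K ∧ J'.card = K.card ∧ M J' := by
  obtain ⟨n, hn⟩ : ∃ n, J.card + n = K.card := ⟨K.card - J.card, by omega⟩
  clear hle
  induction n generalizing J with
  | zero => exact ⟨J, Subset.rfl, subset_union_left, by omega, hJ⟩
  | succ n ih =>
    obtain ⟨e, heK, heJ, hJe⟩ := hM.2.2 J K hJ hK (by omega)
    obtain ⟨J', h1, h2, h3, h4⟩ := ih hJe (by rw [card_insert_of_notMem heJ]; omega)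
    refine ⟨J', (subset_insert _ _).trans h1, h2.trans ?_, h3, h4⟩
    rw [insert_union, insert_eq_self.mpr (mem_union_right _ heK)]

/-- For two independent sets `A`, `B` of a matroid, there is a map assigning to each
`e ∈ B \ A` that cannot be freely added a distinct element `φ e ∈ A \ B` such that
`A - φ e + e` is independent. -/
lemma exists_exchange_map {M : Finset α → Prop} (hM : IsMatroidFam M)
    {A B : Finset α} (hA : M A) (hB : M B) :
    ∃ φ : α → α,
      (∀ e₁ ∈ B \ A, ∀ e₂ ∈ B \ A, ¬ M (insert e₁ A) → ¬ M (insert e₂ A) →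
        φ e₁ = φ e₂ → e₁ = e₂) ∧
      (∀ e ∈ B \ A, ¬ M (insert e A) →
        φ e ∈ A \ B ∧ M (insert e (A.erase (φ e)))) := by
  classical
  set D : Finset α := (B \ A).filter (fun e => ¬ M (insert e A)) with hD
  set N : α → Finset α :=
    (fun e => (A \ B).filter (fun a => M (insert e (A.erase a)))) with hN
  have hall : ∀ s : Finset {x // x ∈ D}, s.card ≤ (s.biUnion (fun e => N e.val)).card := by
    intro s
    set U : Finset α := s.biUnion (fun e => N e.val) with hU
    set E : Finset α := s.image Subtype.val with hE
    have hEcard : E.card = s.card := card_image_of_injective _ Subtype.val_injective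
    have hED : E ⊆ D := by
      intro x hx
      obtain ⟨y, _, rfl⟩ := mem_image.mp hx
      exact y.2
    have hUAB : U ⊆ A \ B := by
      intro a ha
      obtain ⟨y, _, hy⟩ := mem_biUnion.mp ha
      exact mem_of_mem_filter a hy
    set K : Finset α := (A ∩ B) ∪ U with hK
    have hKA : K ⊆ A := by
      apply union_subset inter_subset_left (hUAB.trans sdiff_subset)
    have hMK : M K := hM.2.1 A K hA hKA
    have hdisj : Disjoint (A ∩ B) U := by
      intro t h1 h2 x hx
      have := h1 hx; have := h2 hx
      have hxb : x ∈ B := (mem_inter.mp (h1 hx)).2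
      have := (mem_sdiff.mp (hUAB (h2 hx))).2
      exact absurd hxb this
    have hKcard : K.card = (A ∩ B).card + U.card := card_union_of_disjoint hdisj
    -- Claim 1 : no element of E can be added to K independently
    have claim1 : ∀ x : {x // x ∈ D}, x ∈ s → ¬ M (insert x.val K) := by
      intro x hxs hind
      have hxD : x.val ∈ (B \ A).filter (fun e => ¬ M (insert e A)) := x.2
      rw [mem_filter, mem_sdiff] at hxD
      obtain ⟨⟨hxB, hxA⟩, hxdep⟩ := hxD
      have hKneA : K ≠ A := by
        intro h; rw [h] at hind; exact hxdep hind
      have hKlt : K.card < A.card := card_lt_card (ssubset_of_subset_of_ne hKA hKneA)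
      have hcard : (insert x.val K).card ≤ A.card := by
        rw [card_insert_of_notMem (fun h => hxA (hKA h))]; omega
      obtain ⟨J, hJ1, hJ2, hJ3, hJ4⟩ := matroid_grow hM hind hA hcard
      have hJsub : J ⊆ insert x.val A := by
        intro y hy
        rcases mem_union.mp (hJ2 hy) with h | h
        · rcases mem_insert.mp h with h | h
          · simp [h]
          · exact mem_insert_of_mem (hKA h)
        · exact mem_insert_of_mem h
      have hJne : J ≠ insert x.val A := by
        rintro rfl; exact hxdep hJ4
      obtain ⟨a, haIA, haJ⟩ : ∃ a ∈ insert x.val A, a ∉ J := by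
        by_contra h
        push_neg at h
        exact hJne (Subset.antisymm hJsub h)
      have haA : a ∈ A := by
        rcases mem_insert.mp haIA with h | h
        · exact absurd (h ▸ hJ1 (mem_insert_self _ _)) haJ
        · exact h
      have haK : a ∉ K := fun h => haJ (hJ1 (mem_insert_of_mem h))
      have hax : a ≠ x.val := by
        rintro rfl; exact haJ (hJ1 (mem_insert_self _ _))
      have hsub1 : J ⊆ insert x.val (A.erase a) := by
        intro y hy
        rcases mem_insert.mp (hJsub hy) with h | h
        · simp [h]
        · exact mem_insert_of_mem (mem_erase.mpr ⟨fun hya => haJ (hya ▸ hy), h⟩)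
      have hApos : 0 < A.card := card_pos.mpr ⟨a, haA⟩
      have hcard2 : (insert x.val (A.erase a)).card ≤ J.card := by
        rw [card_insert_of_notMem (fun h => hxA (mem_of_mem_erase h)),
          card_erase_of_mem haA]
        omega
      have hJeq : J = insert x.val (A.erase a) := eq_of_subset_of_card_le hsub1 hcard2
      have hMa : M (insert x.val (A.erase a)) := hJeq ▸ hJ4
      have haB : a ∉ B := by
        intro h
        exact haK (mem_union_left _ (mem_inter.mpr ⟨haA, h⟩))
      have haN : a ∈ N x.val := mem_filter.mpr ⟨mem_sdiff.mpr ⟨haA, haB⟩, hMa⟩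
      exact haK (mem_union_right _ (mem_biUnion.mpr ⟨x, hxs, haN⟩))
    -- Claim 2 : card comparison via the exchange axiom
    have hCsub : (A ∩ B) ∪ E ⊆ B := by
      apply union_subset inter_subset_right
      intro x hx
      exact (mem_sdiff.mp ((mem_filter.mp (hED hx)).1)).1
    have hMC : M ((A ∩ B) ∪ E) := hM.2.1 B _ hB hCsub
    have hdisjE : Disjoint (A ∩ B) E := by
      intro t h1 h2 x hx
      have hx1 := mem_inter.mp (h1 hx)
      have hx2 := (mem_sdiff.mp ((mem_filter.mp (hED (h2 hx))).1)).2
      exact absurd hx1.1 hx2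
    have hCcard : ((A ∩ B) ∪ E).card = (A ∩ B).card + E.card :=
      card_union_of_disjoint hdisjE
    by_contra hlt
    push_neg at hlt
    have hlt' : K.card < ((A ∩ B) ∪ E).card := by omega
    obtain ⟨x, hxC, hxK, hxind⟩ := hM.2.2 K _ hMK hMC hlt'
    rcases mem_union.mp hxC with h | h
    · exact hxK (mem_union_left _ h)
    · obtain ⟨y, hys, hyx⟩ := mem_image.mp h
      exact claim1 y hys (hyx ▸ hxind)
  obtain ⟨g, hginj, hgmem⟩ :=
    (Finset.all_card_le_biUnion_card_iff_exists_injective (fun e : {x // x ∈ D} => N e.val)).mp hall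
  refine ⟨fun e => if h : e ∈ D then g ⟨e, h⟩ else e, ?_, ?_⟩
  · intro e₁ he₁ e₂ he₂ hd₁ hd₂ heq
    have h₁ : e₁ ∈ D := mem_filter.mpr ⟨he₁, hd₁⟩
    have h₂ : e₂ ∈ D := mem_filter.mpr ⟨he₂, hd₂⟩
    replace heq : g ⟨e₁, h₁⟩ = g ⟨e₂, h₂⟩ := by simpa [dif_pos h₁, dif_pos h₂] using heq
    exact Subtype.mk_eq_mk.mp (hginj heq)
  · intro e he hd
    have h₁ : e ∈ D := mem_filter.mpr ⟨he, hd⟩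
    simp only [dif_pos h₁]
    have h2 : g ⟨e, h₁⟩ ∈ (A \ B).filter (fun a => M (insert e (A.erase a))) := hgmem ⟨e, h₁⟩
    rw [mem_filter] at h2
    exact ⟨h2.1, h2.2⟩

end AuxLS

lemma sum_w_L1 {α : Type*} [DecidableEq α] {f : Finset α → ℝ} (hsub : SubmodularFn f)
    (ord : α → ℕ) (A : Finset α) :
    ∀ Z : Finset α, Z ⊆ A →
      f A - f (A \ Z) ≤ ∑ a ∈ Z,
        (f (insert a (A.filter fun b => ord b < ord a)) -
          f (A.filter fun b => ord b < ord a)) := by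
  intro Z
  induction Z using Finset.strongInductionOn with
  | _ Z ih =>
    intro hZA
    rcases Z.eq_empty_or_nonempty with rfl | hne
    · simp
    · obtain ⟨a, haZ, hamin⟩ := Finset.exists_min_image Z ord hne
      have haA : a ∈ A := hZA haZ
      have h1 := ih _ (erase_ssubset haZ) ((erase_subset _ _).trans hZA)
      have hins : insert a (A \ Z) = A \ Z.erase a := by
        ext y
        by_cases hya : y = a <;> simp [hya, haA, haZ, mem_sdiff, mem_erase] <;> tauto
      have hXY : (A.filter fun b => ord b < ord a) ⊆ A \ Z := by
        intro b hb
        rw [mem_filter] at hb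
        exact mem_sdiff.mpr ⟨hb.1, fun hbZ => absurd (hamin b hbZ) (by omega)⟩
      have haY : a ∉ A \ Z := fun h => (mem_sdiff.mp h).2 haZ
      have hm := submod_marginal hsub hXY haY
      rw [hins] at hm
      rw [← Finset.sum_erase_add _ _ haZ]
      linarith

lemma sum_w_L2 {α : Type*} [DecidableEq α] {f : Finset α → ℝ} (hsub : SubmodularFn f)
    (ord : α → ℕ) (hinj : Function.Injective ord) (A : Finset α) :
    ∀ Z : Finset α, Z ⊆ A →
      (∑ a ∈ Z,
        (f (insert a (A.filter fun b => ord b < ord a)) -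
          f (A.filter fun b => ord b < ord a))) ≤ f Z - f ∅ := by
  intro Z
  induction Z using Finset.strongInductionOn with
  | _ Z ih =>
    intro hZA
    rcases Z.eq_empty_or_nonempty with rfl | hne
    · simp
    · obtain ⟨a, haZ, hamax⟩ := Finset.exists_max_image Z ord hne
      have haA : a ∈ A := hZA haZ
      have h1 := ih _ (erase_ssubset haZ) ((erase_subset _ _).trans hZA)
      have hXY : Z.erase a ⊆ A.filter fun b => ord b < ord a := by
        intro b hb
        obtain ⟨hba, hbZ⟩ := mem_erase.mp hb
        refine mem_filter.mpr ⟨hZA hbZ, lt_of_le_of_ne (hamax b hbZ) ?_⟩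
        exact fun h => hba (hinj h)
      have haP : a ∉ A.filter fun b => ord b < ord a := by simp
      have hm := submod_marginal hsub hXY haP
      rw [insert_erase haZ] at hm
      rw [← Finset.sum_erase_add _ _ haZ]
      linarith

lemma f_union_le {α : Type*} [DecidableEq α] {f : Finset α → ℝ} (hsub : SubmodularFn f)
    (A : Finset α) :
    ∀ C : Finset α, f (A ∪ C) ≤ f A + ∑ e ∈ C \ A, (f (insert e A) - f A) := by
  intro C
  induction C using Finset.induction_on with
  | empty => simp
  | @insert a s has ih =>
    by_cases haA : a ∈ A
    · rw [union_insert, insert_eq_self.mpr (mem_union_left _ haA),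
        insert_sdiff_of_mem _ haA]
      exact ih
    · have hnotin : a ∉ A ∪ s := fun h => (mem_union.mp h).elim haA has
      have hm := submod_marginal hsub (subset_union_left (s₂ := s)) hnotin
      have hsd : (insert a s) \ A = insert a (s \ A) := insert_sdiff_of_notMem _ haA
      have hna : a ∉ s \ A := fun h => has (mem_sdiff.mp h).1
      rw [union_insert, hsd, sum_insert hna]
      linarith

/-- On a `(p+1)`-stable instance of monotone submodular maximization over
the intersection of `p` matroids, every maximal `(p,1)`-local optimum equals the optimal
solution `S*`. -/
theorem local_search_recovers_submodular_matroid_intersection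
    {α : Type*} [Fintype α] [DecidableEq α] (p : ℕ) (hp : 0 < p)
    (Is : Fin p → (Finset α → Prop)) (hmat : ∀ i : Fin p, IsMatroidFam (Is i))
    (I : Finset α → Prop) (hI : ∀ S : Finset α, I S ↔ ∀ i : Fin p, Is i S)
    (f : Finset α → ℝ) (hf0 : ∀ S : Finset α, 0 ≤ f S)
    (hmono : MonotoneFn f) (hsub : SubmodularFn f)
    (Sstar : Finset α) (hstable : SubmodStable I f ((p : ℝ) + 1) Sstar)
    (A : Finset α) (hA : I A) (hAmax : ∀ e : α, e ∉ A → ¬ I (insert e A))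
    (hlocal : LocalOpt p I f A) :
    A = Sstar := by
  classical
  by_contra hne
  have hAi : ∀ i, Is i A := (hI A).mp hA
  have hBI : I Sstar := hstable.1
  have hBi : ∀ i, Is i Sstar := (hI Sstar).mp hBI
  set B := Sstar with hBdef
  -- exchange maps for each matroid
  have hex := fun i : Fin p => exists_exchange_map (hmat i) (hAi i) (hBi i)
  choose φ hφinj hφmem using hex
  set D : Fin p → Finset α := fun i => (B \ A).filter (fun e => ¬ Is i (insert e A))
    with hDdef
  set Z : α → Finset α := fun e =>
    ((univ : Finset (Fin p)).filter (fun i => e ∈ D i)).image (fun i => φ i e) with hZdef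
  -- ordering and weights
  set ord : α → ℕ := fun a => ((Fintype.equivFin α) a : ℕ) with hord
  have hordinj : Function.Injective ord := by
    intro a b h
    exact (Fintype.equivFin α).injective (Fin.val_injective h)
  set w : α → ℝ := fun a =>
    f (insert a (A.filter fun b => ord b < ord a)) -
      f (A.filter fun b => ord b < ord a) with hw
  have hw0 : ∀ a, 0 ≤ w a := by
    intro a
    have := hmono (A.filter fun b => ord b < ord a)
      (insert a (A.filter fun b => ord b < ord a)) (subset_insert _ _)
    simp only [hw]
    linarith
  have hL1 : ∀ Y : Finset α, Y ⊆ A → f A - f (A \ Y) ≤ ∑ a ∈ Y, w a :=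
    fun Y h => sum_w_L1 hsub ord A Y h
  have hL2 : ∀ Y : Finset α, Y ⊆ A → ∑ a ∈ Y, w a ≤ f Y - f ∅ :=
    fun Y h => sum_w_L2 hsub ord hordinj A Y h
  -- properties of the swap sets
  have hZsub : ∀ e, Z e ⊆ A \ B := by
    intro e a ha
    obtain ⟨i, hi, rfl⟩ := mem_image.mp ha
    have hiD : e ∈ D i := (mem_filter.mp hi).2
    have h2 := mem_filter.mp hiD
    exact (hφmem i e h2.1 h2.2).1
  have hZA : ∀ e, Z e ⊆ A := fun e => (hZsub e).trans sdiff_subset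
  have hZcard : ∀ e, (Z e).card ≤ p := by
    intro e
    refine le_trans card_image_le (le_trans (card_filter_le _ _) ?_)
    simp
  have hZind : ∀ e ∈ B \ A, I (insert e (A \ Z e)) := by
    intro e he
    refine (hI _).mpr (fun i => ?_)
    by_cases hdep : Is i (insert e A)
    · exact (hmat i).2.1 _ _ hdep (insert_subset_insert _ sdiff_subset)
    · have heD : e ∈ D i := mem_filter.mpr ⟨he, hdep⟩
      have hmemZ : φ i e ∈ Z e :=
        mem_image.mpr ⟨i, mem_filter.mpr ⟨mem_univ _, heD⟩, rfl⟩
      have h2 := (hφmem i e he hdep).2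
      refine (hmat i).2.1 _ _ h2 (insert_subset_insert _ ?_)
      intro x hx
      obtain ⟨hxA, hxZ⟩ := mem_sdiff.mp hx
      exact mem_erase.mpr ⟨fun h => hxZ (h ▸ hmemZ), hxA⟩
  -- per-element local-optimality bound
  have hper : ∀ e ∈ B \ A, f (insert e A) - f A ≤ ∑ a ∈ Z e, w a := by
    intro e he
    obtain ⟨heB, heA⟩ := mem_sdiff.mp he
    have d1 : f (insert e A) - f A ≤ f (insert e (A \ Z e)) - f (A \ Z e) :=
      submod_marginal hsub sdiff_subset heA
    have d2 : f (insert e (A \ Z e)) ≤ f A :=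
      hlocal e heA (Z e) (hZA e) (hZcard e) (hZind e he)
    have d3 := hL1 (Z e) (hZA e)
    linarith
  -- each element of A \ B is used at most p times
  have hcount : ∀ a, ((B \ A).filter (fun e => a ∈ Z e)).card ≤ p := by
    intro a
    have hψ : ∀ e ∈ (B \ A).filter (fun e => a ∈ Z e),
        ∃ i : Fin p, e ∈ D i ∧ φ i e = a := by
      intro e he
      obtain ⟨i, hi, hia⟩ := mem_image.mp (mem_filter.mp he).2
      exact ⟨i, (mem_filter.mp hi).2, hia⟩
    have hmain : ((B \ A).filter (fun e => a ∈ Z e)).card ≤ (univ : Finset (Fin p)).card := by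
      refine Finset.card_le_card_of_injOn
        (fun e => if h : ∃ i : Fin p, e ∈ D i ∧ φ i e = a then h.choose else ⟨0, hp⟩)
        (fun e _ => mem_univ _) ?_
      intro e₁ h₁ e₂ h₂ heq
      have he₁ := hψ e₁ h₁
      have he₂ := hψ e₂ h₂
      simp only [dif_pos he₁, dif_pos he₂] at heq
      have hc₁ := he₁.choose_spec
      have hc₂ := he₂.choose_spec
      rw [← heq] at hc₂
      have hd₁ := mem_filter.mp hc₁.1
      have hd₂ := mem_filter.mp hc₂.1
      exact hφinj he₁.choose e₁ hd₁.1 e₂ hd₂.1 hd₁.2 hd₂.2 (hc₁.2.trans hc₂.2.symm)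
    simpa using hmain
  -- double-counting the weights
  have hsum : ∑ e ∈ B \ A, ∑ a ∈ Z e, w a ≤ (p : ℝ) * ∑ a ∈ A \ B, w a := by
    have h1 : ∀ e ∈ B \ A, ∑ a ∈ Z e, w a
        = ∑ a ∈ A \ B, (if a ∈ Z e then w a else 0) := by
      intro e _
      rw [Finset.sum_ite_mem, inter_eq_right.mpr (hZsub e)]
    rw [Finset.sum_congr rfl h1, Finset.sum_comm]
    have h2 : ∀ a ∈ A \ B, (∑ e ∈ B \ A, if a ∈ Z e then w a else 0) ≤ (p : ℝ) * w a := by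
      intro a _
      rw [← Finset.sum_filter, Finset.sum_const, nsmul_eq_mul]
      exact mul_le_mul_of_nonneg_right (Nat.cast_le.mpr (hcount a)) (hw0 a)
    calc (∑ a ∈ A \ B, ∑ e ∈ B \ A, if a ∈ Z e then w a else 0)
        ≤ ∑ a ∈ A \ B, (p : ℝ) * w a := Finset.sum_le_sum h2
      _ = (p : ℝ) * ∑ a ∈ A \ B, w a := (Finset.mul_sum _ _ _).symm
  -- the key inequality
  have hkey : f B ≤ f A + (p : ℝ) * ∑ a ∈ A \ B, w a := by
    have h1 : f B ≤ f (A ∪ B) := hmono _ _ subset_union_right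
    have h2 := f_union_le hsub A B
    have h3 : ∑ e ∈ B \ A, (f (insert e A) - f A) ≤ ∑ e ∈ B \ A, ∑ a ∈ Z e, w a :=
      Finset.sum_le_sum hper
    linarith
  -- the perturbation
  set f' : Finset α → ℝ := fun S => f S + (p : ℝ) * ∑ a ∈ S ∩ A, w a with hf'
  have hp0 : (0 : ℝ) ≤ (p : ℝ) := Nat.cast_nonneg p
  have hsum_nonneg : ∀ S : Finset α, 0 ≤ ∑ a ∈ S ∩ A, w a :=
    fun S => Finset.sum_nonneg (fun a _ => hw0 a)
  have hub : ∀ S : Finset α, ∑ a ∈ S ∩ A, w a ≤ f S := by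
    intro S
    have h1 := hL2 (S ∩ A) inter_subset_right
    have h2 := hmono (S ∩ A) S inter_subset_left
    have h3 := hf0 ∅
    linarith
  have hpert : IsPerturbation ((p : ℝ) + 1) f f' := by
    refine ⟨?_, ?_, ?_, ?_, ?_⟩
    · intro S
      have := hf0 S
      have := mul_nonneg hp0 (hsum_nonneg S)
      simp only [hf']
      linarith
    · intro S T hST
      have h1 := hmono S T hST
      have h2 : ∑ a ∈ S ∩ A, w a ≤ ∑ a ∈ T ∩ A, w a :=
        Finset.sum_le_sum_of_subset_of_nonneg (inter_subset_inter hST Subset.rfl)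
          (fun a _ _ => hw0 a)
      have h3 := mul_le_mul_of_nonneg_left h2 hp0
      simp only [hf']
      linarith
    · intro S T
      have h1 := hsub S T
      have h2 : ∑ a ∈ (S ∪ T) ∩ A, w a + ∑ a ∈ (S ∩ T) ∩ A, w a
          = ∑ a ∈ S ∩ A, w a + ∑ a ∈ T ∩ A, w a := by
        have e1 : (S ∪ T) ∩ A = (S ∩ A) ∪ (T ∩ A) := by ext x; simp only [mem_inter, mem_union]; tauto
        have e2 : (S ∩ T) ∩ A = (S ∩ A) ∩ (T ∩ A) := by ext x; simp only [mem_inter]; tauto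
        rw [e1, e2, Finset.sum_union_inter]
      have h3 : (p : ℝ) * (∑ a ∈ (S ∪ T) ∩ A, w a) + (p : ℝ) * (∑ a ∈ (S ∩ T) ∩ A, w a)
          = (p : ℝ) * (∑ a ∈ S ∩ A, w a) + (p : ℝ) * (∑ a ∈ T ∩ A, w a) := by
        rw [← mul_add, ← mul_add, h2]
      simp only [hf']
      linarith
    · intro S
      constructor
      · have := mul_nonneg hp0 (hsum_nonneg S)
        simp only [hf']
        linarith
      · have h1 := hub S
        have h2 := mul_le_mul_of_nonneg_left h1 hp0
        simp only [hf']
        nlinarith [hf0 S]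
    · intro S j hj
      have hdelta : ∑ a ∈ (insert j S) ∩ A, w a - ∑ a ∈ S ∩ A, w a
          = if j ∈ A then w j else 0 := by
        by_cases hjA : j ∈ A
        · rw [if_pos hjA, insert_inter_of_mem hjA,
            Finset.sum_insert (fun h => hj (mem_inter.mp h).1)]
          ring
        · rw [if_neg hjA, insert_inter_of_notMem hjA]
          ring
      have hδ0 : 0 ≤ (if j ∈ A then w j else 0) := by
        by_cases hjA : j ∈ A <;> simp [hjA, hw0 j]
      have hδle : (if j ∈ A then w j else 0) ≤ f {j} := by
        by_cases hjA : j ∈ A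
        · have h1 := hL2 {j} (singleton_subset_iff.mpr hjA)
          rw [Finset.sum_singleton] at h1
          have h2 := hf0 (∅ : Finset α)
          simp only [if_pos hjA]
          linarith
        · simp [hjA, hf0]
      have heq : f' (insert j S) - f' S = (f (insert j S) - f S)
          + (p : ℝ) * (∑ a ∈ (insert j S) ∩ A, w a - ∑ a ∈ S ∩ A, w a) := by
        simp only [hf']
        ring
      rw [hdelta] at heq
      constructor
      · have := mul_nonneg hp0 hδ0
        linarith
      · have h4 := mul_le_mul_of_nonneg_left hδle hp0
        have h5 : ((p : ℝ) + 1) - 1 = (p : ℝ) := by ring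
        rw [h5]
        linarith
  -- conclusion via stability
  have hlt := hstable.2 f' hpert A hA hne
  have hsplit : ∑ a ∈ A ∩ B, w a + ∑ a ∈ A \ B, w a = ∑ a ∈ A, w a :=
    Finset.sum_inter_add_sum_sdiff A B w
  have hfge : f' B ≤ f' A := by
    have e1 : f' B = f B + (p : ℝ) * ∑ a ∈ A ∩ B, w a := by
      simp only [hf']
      rw [inter_comm]
    have e2 : f' A = f A + (p : ℝ) * ∑ a ∈ A, w a := by
      simp only [hf']
      rw [inter_self]
    have h3 : (p : ℝ) * (∑ a ∈ A ∩ B, w a) + (p : ℝ) * (∑ a ∈ A \ B, w a)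
        = (p : ℝ) * ∑ a ∈ A, w a := by
      rw [← mul_add, hsplit]
    linarith
  exact absurd hlt (not_lt.mpr hfge)
end

section
/- Let I = ∩_{i=1}^p Iᵢ, where each (X, Iᵢ) is a matroid on the finite ground set X, with nonnegative additive weights w, and suppose the instance (X, I, w) is p-stable with unique optimal solution S*. Then every maximal independent set A ∈ I that is a (p,1)-local optimum for w (for every e ∈ X \ A and Z ⊆ A with |Z| ≤ p and (A \ Z) ∪ {e} ∈ I, w((A \ Z) ∪ {e}) ≤ w(A)) satisfies A = S*. -/
open Finset

/-- Augmentation: an independent set can be grown (inside the union) to one of size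
at least that of any other independent set. -/
private lemma matroid_augment {α : Type*} [DecidableEq α] {I : Finset α → Prop}
    (hex : ∀ A B : Finset α, I A → I B → A.card < B.card → ∃ e ∈ B, e ∉ A ∧ I (insert e A)) :
    ∀ n : ℕ, ∀ E F : Finset α, I E → I F → F.card ≤ E.card + n →
      ∃ E', E ⊆ E' ∧ E' ⊆ E ∪ F ∧ I E' ∧ F.card ≤ E'.card := by
  intro n
  induction n with
  | zero =>
    intro E F hE _ h
    exact ⟨E, subset_rfl, subset_union_left, hE, by simpa using h⟩
  | succ n ih =>
    intro E F hE hF h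
    by_cases hle : F.card ≤ E.card
    · exact ⟨E, subset_rfl, subset_union_left, hE, hle⟩
    · obtain ⟨e, heF, heE, hIe⟩ := hex E F hE hF (lt_of_not_ge hle)
      obtain ⟨E', h1, h2, h3, h4⟩ := ih (insert e E) F hIe hF (by
        rw [card_insert_of_notMem heE]; omega)
      refine ⟨E', (subset_insert e E).trans h1, h2.trans ?_, h3, h4⟩
      intro x hx
      rcases mem_union.1 hx with hx | hx
      · rcases mem_insert.1 hx with rfl | hx
        · exact mem_union_right _ heF
        · exact mem_union_left _ hx
      · exact mem_union_right _ hx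

/-- If `A` is independent, `A + b` is dependent, and `C` contains every `a ∈ A` with
`A - a + b` independent, then `C + b` is dependent. -/
private lemma circuit_lemma {α : Type*} [DecidableEq α] {I : Finset α → Prop}
    (hex : ∀ A B : Finset α, I A → I B → A.card < B.card → ∃ e ∈ B, e ∉ A ∧ I (insert e A))
    {A C : Finset α} {b : α} (hb : b ∉ A) (hIA : I A)
    (hnb : ¬ I (insert b A)) (hCA : C ⊆ A)
    (hC : ∀ a ∈ A, I (insert b (A.erase a)) → a ∈ C) :
    ¬ I (insert b C) := by
  intro h
  have hbC : b ∉ C := fun hc => hb (hCA hc)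
  have hCne : C ≠ A := by rintro rfl; exact hnb h
  have hcardC : C.card < A.card := card_lt_card (ssubset_of_subset_of_ne hCA hCne)
  obtain ⟨E, hE1, hE2, hE3, hE4⟩ := matroid_augment hex A.card (insert b C) A h hIA
    (by rw [card_insert_of_notMem hbC]; omega)
  have hEsub : E ⊆ insert b A := by
    refine hE2.trans ?_
    intro x hx
    rcases mem_union.1 hx with hx | hx
    · rcases mem_insert.1 hx with rfl | hx
      · exact mem_insert_self _ _
      · exact mem_insert_of_mem (hCA hx)
    · exact mem_insert_of_mem hx
  have hbE : b ∈ E := hE1 (mem_insert_self _ _)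
  have hEne : E ≠ insert b A := by rintro rfl; exact hnb hE3
  obtain ⟨a, haA, haE⟩ : ∃ a ∈ A, a ∉ E := by
    by_contra hcon
    push_neg at hcon
    exact hEne (Subset.antisymm hEsub (insert_subset hbE hcon))
  have hEsub' : E ⊆ insert b (A.erase a) := by
    intro x hx
    rcases mem_insert.1 (hEsub hx) with rfl | hxA
    · exact mem_insert_self _ _
    · exact mem_insert_of_mem (mem_erase.2 ⟨fun hxa => haE (hxa ▸ hx), hxA⟩)
  have hcard : (insert b (A.erase a)).card ≤ E.card := by
    have hberase : b ∉ A.erase a := fun hc => hb (mem_of_mem_erase hc)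
    rw [card_insert_of_notMem hberase, card_erase_of_mem haA]
    omega
  have hEeq : E = insert b (A.erase a) := eq_of_subset_of_card_le hEsub' hcard
  have : I (insert b (A.erase a)) := hEeq ▸ hE3
  exact haE (hE1 (mem_insert_of_mem (hC a haA this)))

/-- The exchange-mapping lemma for a single matroid: there is a system of pairwise
disjoint singletons `Z e ⊆ A \ B` (for `e ∈ B \ A`) with `(A \ Z e) + e` independent. -/
private lemma matroid_exchange_map {α : Type*} [DecidableEq α] {I : Finset α → Prop}
    (hm : IsMatroidFam I) (A B : Finset α) (hA : I A) (hB : I B) :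
    ∃ Z : α → Finset α,
      (∀ e ∈ B \ A, Z e ⊆ A \ B ∧ (Z e).card ≤ 1 ∧ I (insert e (A \ Z e))) ∧
      (∀ e₁ ∈ B \ A, ∀ e₂ ∈ B \ A, e₁ ≠ e₂ → Disjoint (Z e₁) (Z e₂)) := by
  classical
  obtain ⟨-, hdown, hex⟩ := hm
  set B₀ : Finset α := (B \ A).filter (fun b => ¬ I (insert b A)) with hB₀
  set t : B₀ → Finset α := fun b => (A \ B).filter (fun a => I (insert (b : α) (A.erase a)))
    with ht
  have hall : ∀ s : Finset B₀, s.card ≤ (s.biUnion t).card := by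
    intro s
    set T : Finset α := s.image Subtype.val with hT
    set N : Finset α := s.biUnion t with hN
    have hTcard : T.card = s.card := card_image_of_injective _ Subtype.val_injective
    have hTsub : T ⊆ B \ A := by
      intro x hx
      obtain ⟨b, _, rfl⟩ := mem_image.1 hx
      exact (mem_filter.1 b.2).1
    have hNsub : N ⊆ A \ B := by
      intro x hx
      obtain ⟨b, _, hx⟩ := mem_biUnion.1 hx
      exact (mem_filter.1 hx).1
    have hCA' : (A ∩ B) ∪ N ⊆ A := union_subset inter_subset_left (hNsub.trans sdiff_subset)
    have hDB : (A ∩ B) ∪ T ⊆ B := union_subset inter_subset_right (hTsub.trans sdiff_subset)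
    have hIC : I ((A ∩ B) ∪ N) := hdown A _ hA hCA'
    have hID : I ((A ∩ B) ∪ T) := hdown B _ hB hDB
    have hDC : ((A ∩ B) ∪ T).card ≤ ((A ∩ B) ∪ N).card := by
      by_contra hlt
      obtain ⟨e, heD, heC, hIe⟩ := hex _ _ hIC hID (not_le.1 hlt)
      have heT : e ∈ T := by
        rcases mem_union.1 heD with hx | hx
        · exact absurd (mem_union_left _ hx) heC
        · exact hx
      obtain ⟨b, hbs, hbe⟩ := mem_image.1 heT
      have hb2 := mem_filter.1 b.2
      have heBA : e ∈ B \ A := hbe ▸ hb2.1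
      have hnbA : ¬ I (insert e A) := hbe ▸ hb2.2
      have heA : e ∉ A := (mem_sdiff.1 heBA).2
      refine circuit_lemma hex heA hA hnbA hCA' ?_ hIe
      intro a haA hIa
      by_cases haB : a ∈ B
      · exact mem_union_left _ (mem_inter.2 ⟨haA, haB⟩)
      · refine mem_union_right _ (mem_biUnion.2 ⟨b, hbs, ?_⟩)
        rw [ht]
        exact mem_filter.2 ⟨mem_sdiff.2 ⟨haA, haB⟩, by rw [hbe]; exact hIa⟩
    have hdisjT : Disjoint (A ∩ B) T := by
      rw [disjoint_left]
      intro x hx hxT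
      exact (mem_sdiff.1 (hTsub hxT)).2 (mem_inter.1 hx).1
    have hdisjN : Disjoint (A ∩ B) N := by
      rw [disjoint_left]
      intro x hx hxN
      exact (mem_sdiff.1 (hNsub hxN)).2 (mem_inter.1 hx).2
    rw [card_union_of_disjoint hdisjT, card_union_of_disjoint hdisjN, hTcard] at hDC
    omega
  obtain ⟨f, hfinj, hft⟩ := (Finset.all_card_le_biUnion_card_iff_exists_injective t).1 hall
  refine ⟨fun e => if h : e ∈ B₀ then {f ⟨e, h⟩} else ∅, ?_, ?_⟩
  · intro e he
    by_cases h : e ∈ B₀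
    · have hfe := hft ⟨e, h⟩
      have hfe' := mem_filter.1 hfe
      simp only [dif_pos h]
      refine ⟨singleton_subset_iff.2 hfe'.1, by simp, ?_⟩
      rw [sdiff_singleton_eq_erase]
      exact hfe'.2
    · have : I (insert e A) := by
        by_contra hc
        exact h (mem_filter.2 ⟨he, hc⟩)
      simp only [dif_neg h]
      simpa using this
  · intro e₁ he₁ e₂ he₂ hne
    by_cases h1 : e₁ ∈ B₀
    · by_cases h2 : e₂ ∈ B₀
      · simp only [dif_pos h1, dif_pos h2, disjoint_singleton]
        intro hc
        exact hne (congrArg Subtype.val (hfinj hc))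
      · simp [dif_pos h1, dif_neg h2]
    · simp [dif_neg h1]

private lemma sum_biUnion_le_real {α ι : Type*} [DecidableEq α] (s : Finset ι)
    (t : ι → Finset α) (w : α → ℝ) (hw : ∀ a, 0 ≤ w a) :
    ∑ a ∈ s.biUnion t, w a ≤ ∑ i ∈ s, ∑ a ∈ t i, w a := by
  classical
  induction s using Finset.induction with
  | empty => simp
  | @insert x s hx ih =>
    rw [biUnion_insert, sum_insert hx]
    have h1 : ∑ a ∈ t x ∪ s.biUnion t, w a ≤ ∑ a ∈ t x, w a + ∑ a ∈ s.biUnion t, w a := by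
      have := Finset.sum_union_inter (s₁ := t x) (s₂ := s.biUnion t) (f := w)
      have hnn : 0 ≤ ∑ a ∈ t x ∩ s.biUnion t, w a := sum_nonneg fun a _ => hw a
      linarith
    linarith [ih]

/-- On a `p`-stable instance of additive maximization over the
intersection of `p` matroids, every maximal `(p,1)`-local optimum equals the optimal
solution `S*`. -/
theorem local_search_recovers_additive_matroid_intersection
    {α : Type*} [Fintype α] [DecidableEq α] (p : ℕ) (hp : 0 < p)
    (Is : Fin p → (Finset α → Prop)) (hmat : ∀ i : Fin p, IsMatroidFam (Is i))
    (I : Finset α → Prop) (hI : ∀ S : Finset α, I S ↔ ∀ i : Fin p, Is i S)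
    (w : α → ℝ) (hw : ∀ e : α, 0 ≤ w e)
    (Sstar : Finset α) (hstable : AddStable I w (p : ℝ) Sstar)
    (A : Finset α) (hA : I A) (hAmax : ∀ e : α, e ∉ A → ¬ I (insert e A))
    (hlocal : LocalOpt p I (fun S => ∑ e ∈ S, w e) A) :
    A = Sstar := by
  classical
  by_contra hne
  have hSstar : I Sstar := hstable.1
  -- exchange maps for each matroid
  have hmaps := fun i : Fin p =>
    matroid_exchange_map (hmat i) A Sstar ((hI A).1 hA i) ((hI Sstar).1 hSstar i)
  choose Z hZ1 hZ2 using hmaps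
  -- the key inequality: w(S* \ A) ≤ p * w(A \ S*)
  have key : ∑ e ∈ Sstar \ A, w e ≤ (p : ℝ) * ∑ a ∈ A \ Sstar, w a := by
    have step1 : ∀ e ∈ Sstar \ A, w e ≤ ∑ i : Fin p, ∑ a ∈ Z i e, w a := by
      intro e he
      set Ze : Finset α := Finset.univ.biUnion (fun i : Fin p => Z i e) with hZe
      have hZisub : ∀ i : Fin p, Z i e ⊆ A \ Sstar := fun i => (hZ1 i e he).1
      have hZsub : Ze ⊆ A := by
        intro x hx
        obtain ⟨i, _, hx⟩ := mem_biUnion.1 hx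
        exact (mem_sdiff.1 (hZisub i hx)).1
      have hZcard : Ze.card ≤ p := by
        calc Ze.card ≤ ∑ i : Fin p, (Z i e).card := card_biUnion_le
          _ ≤ ∑ _i : Fin p, 1 := sum_le_sum fun i _ => (hZ1 i e he).2.1
          _ = p := by simp
      have hIe : I (insert e (A \ Ze)) := by
        rw [hI]
        intro i
        refine (hmat i).2.1 _ _ (hZ1 i e he).2.2 ?_
        refine insert_subset_insert _ (sdiff_subset_sdiff subset_rfl ?_)
        intro x hx
        exact mem_biUnion.2 ⟨i, mem_univ i, hx⟩
      have heA : e ∉ A := (mem_sdiff.1 he).2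
      have hloc := hlocal e heA Ze hZsub hZcard hIe
      simp only at hloc
      have hsplit : ∑ x ∈ A \ Ze, w x + ∑ x ∈ Ze, w x = ∑ x ∈ A, w x :=
        sum_sdiff hZsub
      have heAZ : e ∉ A \ Ze := fun hc => heA (mem_sdiff.1 hc).1
      rw [sum_insert heAZ] at hloc
      have h2 : w e ≤ ∑ x ∈ Ze, w x := by linarith
      calc w e ≤ ∑ x ∈ Ze, w x := h2
        _ ≤ ∑ i : Fin p, ∑ a ∈ Z i e, w a := sum_biUnion_le_real _ _ _ hw
    calc ∑ e ∈ Sstar \ A, w e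
        ≤ ∑ e ∈ Sstar \ A, ∑ i : Fin p, ∑ a ∈ Z i e, w a := sum_le_sum step1
      _ = ∑ i : Fin p, ∑ e ∈ Sstar \ A, ∑ a ∈ Z i e, w a := sum_comm
      _ ≤ ∑ _i : Fin p, ∑ a ∈ A \ Sstar, w a := by
          refine sum_le_sum fun i _ => ?_
          have hdisj : (↑(Sstar \ A) : Set α).PairwiseDisjoint (Z i) := by
            intro x hx y hy hxy
            exact hZ2 i x hx y hy hxy
          rw [← sum_biUnion hdisj]
          refine sum_le_sum_of_subset_of_nonneg ?_ (fun a _ _ => hw a)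
          intro x hx
          obtain ⟨e, he, hx⟩ := mem_biUnion.1 hx
          exact (hZ1 i e he).1 hx
      _ = (p : ℝ) * ∑ a ∈ A \ Sstar, w a := by
          rw [sum_const, card_univ, Fintype.card_fin, nsmul_eq_mul]
  -- perturbation
  have hp1 : (1 : ℝ) ≤ (p : ℝ) := by exact_mod_cast hp
  set w' : α → ℝ := fun e => if e ∈ A \ Sstar then (p : ℝ) * w e else w e with hw'
  have hbound : ∀ e, w e ≤ w' e ∧ w' e ≤ (p : ℝ) * w e := by
    intro e
    simp only [hw']
    split_ifs with h
    · exact ⟨by nlinarith [hw e], le_rfl⟩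
    · exact ⟨le_rfl, by nlinarith [hw e]⟩
  have hstrict := hstable.2 w' hbound A hA hne
  have hwA1 : ∑ e ∈ A \ Sstar, w' e = (p : ℝ) * ∑ e ∈ A \ Sstar, w e := by
    rw [mul_sum]
    refine sum_congr rfl fun e he => ?_
    simp only [hw', if_pos he]
  have hwA2 : ∑ e ∈ A ∩ Sstar, w' e = ∑ e ∈ A ∩ Sstar, w e := by
    refine sum_congr rfl fun e he => ?_
    have hni : e ∉ A \ Sstar := fun hc => (mem_sdiff.1 hc).2 (mem_inter.1 he).2
    simp only [hw', if_neg hni]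
  have hwS : ∑ e ∈ Sstar, w' e = ∑ e ∈ Sstar, w e := by
    refine sum_congr rfl fun e he => ?_
    have hni : e ∉ A \ Sstar := fun hc => (mem_sdiff.1 hc).2 he
    simp only [hw', if_neg hni]
  have h1 : A \ (A ∩ Sstar) = A \ Sstar := by
    ext x; simp only [mem_sdiff, mem_inter]; tauto
  have h2 : Sstar \ (Sstar ∩ A) = Sstar \ A := by
    ext x; simp only [mem_sdiff, mem_inter]; tauto
  have hAsplit : ∑ e ∈ A \ Sstar, w' e + ∑ e ∈ A ∩ Sstar, w' e = ∑ e ∈ A, w' e := by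
    rw [← h1]; exact sum_sdiff inter_subset_left
  have hSsplit : ∑ e ∈ Sstar \ A, w e + ∑ e ∈ Sstar ∩ A, w e = ∑ e ∈ Sstar, w e := by
    rw [← h2]; exact sum_sdiff inter_subset_left
  have hinter : ∑ e ∈ A ∩ Sstar, w e = ∑ e ∈ Sstar ∩ A, w e := by rw [inter_comm]
  rw [← hAsplit, hwA1, hwA2, hwS, ← hSsplit] at hstrict
  linarith
end
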